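/- arXiv:math/0206189 — 8 statements merged into one kernel-verified Lean document; each statement's English description precedes it below -/
import Mathlib

section
/- Let u, v, w be unit vectors in ℝ^d. Then sin ∠(u,v) · sin ∠(span{u,v}, w) = sin ∠(v,w) · sin ∠(span{v,w}, u) = sin ∠(w,u) · sin ∠(span{w,u}, v), and this common value equals the 3-dimensional volume of the parallelepiped spanned by u, v, w, i.e. the square root of the determinant of the 3×3 Gram matrix G with entries G_{ij} = ⟨a_i, a_j⟩ where (a₁,a₂,a₃) = (u,v,w). -/
open InnerProductGeometry

open scoped RealInnerProductSpace

/-- Angle between a nontrivial subspace and a vector: infimum of angles between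
nonzero vectors of the subspace and the vector. -/
noncomputable def angleSV {V : Type*} [NormedAddCommGroup V] [InnerProductSpace ℝ V]
    (E : Submodule ℝ V) (v : V) : ℝ :=
  sInf {θ : ℝ | ∃ u ∈ E, u ≠ 0 ∧ θ = angle u v}

section Aux

variable {V : Type*} [NormedAddCommGroup V] [InnerProductSpace ℝ V]

lemma arccos_antitone : Antitone Real.arccos := fun _ _ h => by
  rw [Real.arccos_eq_pi_div_two_sub_arcsin, Real.arccos_eq_pi_div_two_sub_arcsin]
  exact sub_le_sub_left (Real.monotone_arcsin h) _

/-- If `p` is the orthogonal projection of `w` onto `E`, then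
`sin (angleSV E w) = ‖w - p‖` for a unit vector `w`. -/
lemma sin_angleSV_eq {E : Submodule ℝ V} {w p : V} (hw : ‖w‖ = 1)
    (hpE : p ∈ E) (horth : ∀ x ∈ E, ⟪x, w - p⟫ = 0)
    (hE : ∃ x ∈ E, x ≠ 0) :
    Real.sin (angleSV E w) = ‖w - p‖ := by
  have hinner : ∀ x ∈ E, ⟪x, w⟫ = ⟪x, p⟫ := by
    intro x hx
    have := horth x hx
    rw [inner_sub_right] at this
    linarith
  have hpw : ⟪p, w⟫ = ‖p‖ ^ 2 := by
    rw [hinner p hpE, real_inner_self_eq_norm_sq]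
  have hwp2 : ‖w - p‖ ^ 2 = 1 - ‖p‖ ^ 2 := by
    rw [norm_sub_sq_real, hw, real_inner_comm, hpw]; ring
  obtain ⟨x0, hx0E, hx00⟩ := hE
  by_cases hp : p = 0
  · -- w is orthogonal to E; all angles are π/2
    have hall : ∀ θ ∈ {θ : ℝ | ∃ x ∈ E, x ≠ 0 ∧ θ = angle x w}, θ = Real.pi / 2 := by
      rintro θ ⟨x, hx, hx0, rfl⟩
      have h0 : ⟪x, w⟫ = 0 := by rw [hinner x hx, hp, inner_zero_right]
      rw [angle, h0, zero_div, Real.arccos_eq_pi_div_two]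
    have hmem : Real.pi / 2 ∈ {θ : ℝ | ∃ x ∈ E, x ≠ 0 ∧ θ = angle x w} := by
      refine ⟨x0, hx0E, hx00, ?_⟩
      have := hall (angle x0 w) ⟨x0, hx0E, hx00, rfl⟩
      exact this.symm
    have : angleSV E w = Real.pi / 2 := by
      unfold angleSV
      refine le_antisymm (csInf_le ⟨Real.pi / 2, fun θ hθ => (hall θ hθ).ge⟩ hmem)
        (le_csInf ⟨_, hmem⟩ fun θ hθ => (hall θ hθ).ge)
    rw [this, Real.sin_pi_div_two, hp, sub_zero, hw]
  · have hpn : (0 : ℝ) < ‖p‖ := norm_pos_iff.2 hp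
    have hlb : ∀ θ ∈ {θ : ℝ | ∃ x ∈ E, x ≠ 0 ∧ θ = angle x w}, angle p w ≤ θ := by
      rintro θ ⟨x, hx, hx0, rfl⟩
      have hxn : (0 : ℝ) < ‖x‖ := norm_pos_iff.2 hx0
      rw [angle, angle]
      apply arccos_antitone
      rw [hw, mul_one, mul_one, hpw, hinner x hx]
      have h1 : ⟪x, p⟫ ≤ ‖x‖ * ‖p‖ := real_inner_le_norm x p
      rw [div_le_div_iff₀ hxn hpn]
      calc ⟪x, p⟫ * ‖p‖ ≤ ‖x‖ * ‖p‖ * ‖p‖ := by nlinarith [hpn.le]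
        _ = ‖p‖ ^ 2 * ‖x‖ := by ring
    have hmem : angle p w ∈ {θ : ℝ | ∃ x ∈ E, x ≠ 0 ∧ θ = angle x w} :=
      ⟨p, hpE, hp, rfl⟩
    have heq : angleSV E w = angle p w := by
      unfold angleSV
      exact le_antisymm (csInf_le ⟨angle p w, hlb⟩ hmem) (le_csInf ⟨_, hmem⟩ hlb)
    rw [heq]
    have hs := sin_angle_mul_norm_mul_norm p w
    rw [hw, mul_one] at hs
    have hin : ⟪p, p⟫ * ⟪w, w⟫ - ⟪p, w⟫ * ⟪p, w⟫ = (‖p‖ * ‖w - p‖) ^ 2 := by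
      rw [real_inner_self_eq_norm_sq, real_inner_self_eq_norm_sq, hpw, hw]
      nlinarith [hwp2]
    rw [hin, Real.sqrt_sq (by positivity)] at hs
    have := mul_right_cancel₀ (ne_of_gt hpn) (hs.trans (mul_comm ‖p‖ ‖w - p‖))
    exact this

/-- The key identity: for unit vectors,
`sin ∠(u,v) · sin ∠(span{u,v}, w) = √(1 - a² - b² - c² + 2abc)`. -/
lemma key_identity (u v w : V) (hu : ‖u‖ = 1) (hv : ‖v‖ = 1) (hw : ‖w‖ = 1) :
    Real.sin (angle u v) * Real.sin (angleSV (Submodule.span ℝ {u, v}) w)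
      = Real.sqrt (1 - ⟪u, v⟫ ^ 2 - ⟪v, w⟫ ^ 2 - ⟪u, w⟫ ^ 2
          + 2 * ⟪u, v⟫ * ⟪v, w⟫ * ⟪u, w⟫) := by
  set a := ⟪u, v⟫ with ha
  set b := ⟪v, w⟫ with hb
  set c := ⟪u, w⟫ with hc
  have huu : ⟪u, u⟫ = 1 := by rw [real_inner_self_eq_norm_sq, hu]; norm_num
  have hvv : ⟪v, v⟫ = 1 := by rw [real_inner_self_eq_norm_sq, hv]; norm_num
  have hww : ⟪w, w⟫ = 1 := by rw [real_inner_self_eq_norm_sq, hw]; norm_num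
  have hu0 : u ≠ 0 := by intro h; rw [h, norm_zero] at hu; norm_num at hu
  have huE : u ∈ Submodule.span ℝ ({u, v} : Set V) :=
    Submodule.subset_span (Set.mem_insert _ _)
  have hvE : v ∈ Submodule.span ℝ ({u, v} : Set V) :=
    Submodule.subset_span (Set.mem_insert_of_mem _ rfl)
  have hsin : Real.sin (angle u v) = Real.sqrt (1 - a ^ 2) := by
    have := sin_angle_mul_norm_mul_norm u v
    rw [hu, hv, mul_one, mul_one, huu, hvv, one_mul, ← ha] at this
    rw [this]; ring_nf
  have ha2 : a ^ 2 ≤ 1 := by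
    have h1 := abs_real_inner_le_norm u v
    rw [hu, hv, mul_one] at h1
    nlinarith [abs_nonneg a, sq_abs a, le_abs_self a, neg_abs_le a]
  by_cases hs : 1 - a ^ 2 = 0
  · -- degenerate case: v = ± u
    have hav : v = a • u := by
      have hfac : (a - 1) * (a + 1) = 0 := by nlinarith
      rcases mul_eq_zero.1 hfac with h1 | h1
      · have ha1 : a = 1 := by linarith
        have : ‖v‖ • u = ‖u‖ • v := by
          rw [← inner_eq_norm_mul_iff_real, ← ha, ha1, hu, hv, mul_one]
        rw [hu, hv, one_smul, one_smul] at this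
        rw [← this, ha1, one_smul]
      · have ha1 : a = -1 := by linarith
        have h2 : ⟪u, -v⟫ = ‖u‖ * ‖-v‖ := by
          rw [inner_neg_right, ← ha, ha1, hu, norm_neg, hv, mul_one]; ring
        have := inner_eq_norm_mul_iff_real.1 h2
        rw [hu, norm_neg, hv, one_smul, one_smul] at this
        rw [this, ha1]
        simp
    have hbac : b = a * c := by
      rw [hb, hav, real_inner_smul_left, ← hc]
    have hzero : 1 - a ^ 2 - b ^ 2 - c ^ 2 + 2 * a * b * c = 0 := by
      rw [hbac]
      linear_combination (1 - c ^ 2 + a ^ 2 * c ^ 2 - c ^ 2 * a ^ 2) * hs + (1 - c ^ 2) * hs - (1 - c ^ 2) * hs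
    rw [hzero, Real.sqrt_zero, hsin, hs, Real.sqrt_zero, zero_mul]
  · -- nondegenerate case
    have hspos : (0 : ℝ) < 1 - a ^ 2 := lt_of_le_of_ne (by linarith) (Ne.symm hs)
    set s : ℝ := 1 - a ^ 2 with hsdef
    set p : V := ((c - a * b) / s) • u + ((b - a * c) / s) • v with hp
    have hpE : p ∈ Submodule.span ℝ ({u, v} : Set V) :=
      Submodule.add_mem _ (Submodule.smul_mem _ _ huE) (Submodule.smul_mem _ _ hvE)
    have hup : ⟪u, w - p⟫ = 0 := by
      rw [inner_sub_right, hp, inner_add_right, real_inner_smul_right,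
        real_inner_smul_right, huu, ← ha, ← hc]
      field_simp
      ring
    have hvp : ⟪v, w - p⟫ = 0 := by
      rw [inner_sub_right, hp, inner_add_right, real_inner_smul_right,
        real_inner_smul_right, hvv, real_inner_comm u v, ← ha, ← hb]
      field_simp
      ring
    have horth : ∀ x ∈ Submodule.span ℝ ({u, v} : Set V), ⟪x, w - p⟫ = 0 := by
      intro x hx
      obtain ⟨m, n, rfl⟩ := Submodule.mem_span_pair.1 hx
      rw [inner_add_left, real_inner_smul_left, real_inner_smul_left, hup, hvp]
      ring
    have hsineq := sin_angleSV_eq hw hpE horth ⟨u, huE, hu0⟩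
    rw [hsineq, hsin]
    rw [show ‖w - p‖ = Real.sqrt (‖w - p‖ ^ 2) from (Real.sqrt_sq (norm_nonneg _)).symm,
      ← Real.sqrt_mul hspos.le]
    congr 1
    have hwp : ⟪w, p⟫ = ((c - a * b) / s) * c + ((b - a * c) / s) * b := by
      rw [hp, inner_add_right, real_inner_smul_right, real_inner_smul_right,
        real_inner_comm u w, real_inner_comm v w, ← hb, ← hc]
    have hpp : ‖p‖ ^ 2 = ((c - a * b) / s) ^ 2 + 2 * ((c - a * b) / s) * ((b - a * c) / s) * a
        + ((b - a * c) / s) ^ 2 := by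
      rw [← real_inner_self_eq_norm_sq, hp, inner_add_left, inner_add_right, inner_add_right,
        real_inner_smul_left, real_inner_smul_left, real_inner_smul_left, real_inner_smul_left,
        real_inner_smul_right, real_inner_smul_right, real_inner_smul_right,
        real_inner_smul_right, huu, hvv, real_inner_comm u v, ← ha]
      ring
    rw [norm_sub_sq_real, hw, hwp, hpp]
    field_simp
    ring

end Aux

theorem stmt0 {d : ℕ} (u v w : EuclideanSpace ℝ (Fin d))
    (hu : ‖u‖ = 1) (hv : ‖v‖ = 1) (hw : ‖w‖ = 1)
    (G : Matrix (Fin 3) (Fin 3) ℝ)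
    (hG : G = Matrix.of fun i j => (inner ℝ (![u, v, w] i) (![u, v, w] j) : ℝ)) :
    Real.sin (angle u v) * Real.sin (angleSV (Submodule.span ℝ {u, v}) w)
      = Real.sin (angle v w) * Real.sin (angleSV (Submodule.span ℝ {v, w}) u)
    ∧ Real.sin (angle v w) * Real.sin (angleSV (Submodule.span ℝ {v, w}) u)
      = Real.sin (angle w u) * Real.sin (angleSV (Submodule.span ℝ {w, u}) v)
    ∧ Real.sin (angle u v) * Real.sin (angleSV (Submodule.span ℝ {u, v}) w)
      = Real.sqrt G.det := by
  have k1 := key_identity u v w hu hv hw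
  have k2 := key_identity v w u hv hw hu
  have k3 := key_identity w u v hw hu hv
  have e1 : (1 : ℝ) - ⟪v, w⟫ ^ 2 - ⟪w, u⟫ ^ 2 - ⟪v, u⟫ ^ 2
      + 2 * ⟪v, w⟫ * ⟪w, u⟫ * ⟪v, u⟫
      = 1 - ⟪u, v⟫ ^ 2 - ⟪v, w⟫ ^ 2 - ⟪u, w⟫ ^ 2
      + 2 * ⟪u, v⟫ * ⟪v, w⟫ * ⟪u, w⟫ := by
    rw [real_inner_comm u v, real_inner_comm u w]; ring
  have e2 : (1 : ℝ) - ⟪w, u⟫ ^ 2 - ⟪u, v⟫ ^ 2 - ⟪w, v⟫ ^ 2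
      + 2 * ⟪w, u⟫ * ⟪u, v⟫ * ⟪w, v⟫
      = 1 - ⟪u, v⟫ ^ 2 - ⟪v, w⟫ ^ 2 - ⟪u, w⟫ ^ 2
      + 2 * ⟪u, v⟫ * ⟪v, w⟫ * ⟪u, w⟫ := by
    rw [real_inner_comm u w, real_inner_comm v w]; ring
  rw [e1] at k2
  rw [e2] at k3
  have huu : ⟪u, u⟫ = 1 := by rw [real_inner_self_eq_norm_sq, hu]; norm_num
  have hvv : ⟪v, v⟫ = 1 := by rw [real_inner_self_eq_norm_sq, hv]; norm_num
  have hww : ⟪w, w⟫ = 1 := by rw [real_inner_self_eq_norm_sq, hw]; norm_num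
  have hdet : G.det = 1 - ⟪u, v⟫ ^ 2 - ⟪v, w⟫ ^ 2 - ⟪u, w⟫ ^ 2
      + 2 * ⟪u, v⟫ * ⟪v, w⟫ * ⟪u, w⟫ := by
    rw [hG, Matrix.det_fin_three]
    simp only [Matrix.of_apply, Matrix.cons_val', Matrix.cons_val_zero, Matrix.cons_val_one,
      Matrix.head_cons, Matrix.empty_val', Matrix.cons_val_fin_one, Matrix.cons_val_two,
      Matrix.tail_cons, Matrix.head_fin_const]
    rw [show (inner ℝ u u : ℝ) = 1 from huu, show (inner ℝ v v : ℝ) = 1 from hvv,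
      show (inner ℝ w w : ℝ) = 1 from hww, real_inner_comm u v, real_inner_comm u w,
      real_inner_comm v w]
    ring
  exact ⟨k1.trans k2.symm, k2.trans k3.symm, by rw [k1, hdet]⟩
end

section
/- Let A, B, C be nontrivial linear subspaces of ℝ^d. Then sin ∠(A, B + C) ≥ sin ∠(A, B) · sin ∠(A + B, C). -/
open InnerProductGeometry

/-- Angle between two nontrivial subspaces: infimum of angles between nonzero vectors. -/
noncomputable def angleSS {V : Type*} [NormedAddCommGroup V] [InnerProductSpace ℝ V]
    (E F : Submodule ℝ V) : ℝ :=
  sInf {θ : ℝ | ∃ u ∈ E, ∃ v ∈ F, u ≠ 0 ∧ v ≠ 0 ∧ θ = angle u v}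

section Aux

variable {V : Type*} [NormedAddCommGroup V] [InnerProductSpace ℝ V]

local notation "⟪" x ", " y "⟫" => @inner ℝ _ _ x y

private lemma sinsq_identity (u v : V) :
    (Real.sin (angle u v))^2 * (‖u‖^2 * ‖v‖^2) = ‖u‖^2 * ‖v‖^2 - ⟪u, v⟫^2 := by
  have hc := cos_angle_mul_norm_mul_norm u v
  have hs := Real.sin_sq_add_cos_sq (angle u v)
  linear_combination (‖u‖^2*‖v‖^2) * hs - (Real.cos (angle u v)*(‖u‖*‖v‖) + ⟪u, v⟫) * hc

private lemma sin_angle_nonneg' (u v : V) : 0 ≤ Real.sin (angle u v) :=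
  Real.sin_nonneg_of_nonneg_of_le_pi (angle_nonneg u v) (angle_le_pi u v)

/-- The orthogonal projection onto the line through `v` realizes `sin (angle u v) * ‖u‖`. -/
private lemma norm_sub_proj_le {u v : V} (hv : v ≠ 0) :
    ‖u - (⟪u, v⟫ / ‖v‖^2) • v‖ ≤ Real.sin (angle u v) * ‖u‖ := by
  have hv2 : (0:ℝ) < ‖v‖^2 := by
    have := norm_pos_iff.mpr hv
    positivity
  have hsq : ‖u - (⟪u, v⟫ / ‖v‖^2) • v‖^2 ≤ (Real.sin (angle u v) * ‖u‖)^2 := by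
    have h1 : ‖u - (⟪u, v⟫ / ‖v‖^2) • v‖^2
        = ‖u‖^2 - 2 * ((⟪u, v⟫ / ‖v‖^2) * ⟪u, v⟫) + (⟪u, v⟫ / ‖v‖^2)^2 * ‖v‖^2 := by
      rw [norm_sub_sq_real, real_inner_smul_right, norm_smul]
      simp only [Real.norm_eq_abs, mul_pow, sq_abs]
    have h2 := sinsq_identity u v
    have hne : (‖v‖:ℝ)^2 ≠ 0 := ne_of_gt hv2
    have heq : ‖u - (⟪u, v⟫ / ‖v‖^2) • v‖^2 = (Real.sin (angle u v) * ‖u‖)^2 := by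
      rw [h1, mul_pow]
      field_simp
      linear_combination (-1 : ℝ) * h2
    exact le_of_eq heq
  calc ‖u - (⟪u, v⟫ / ‖v‖^2) • v‖ = Real.sqrt (‖u - (⟪u, v⟫ / ‖v‖^2) • v‖^2) :=
        (Real.sqrt_sq (norm_nonneg _)).symm
    _ ≤ Real.sqrt ((Real.sin (angle u v) * ‖u‖)^2) := Real.sqrt_le_sqrt hsq
    _ = Real.sin (angle u v) * ‖u‖ :=
        Real.sqrt_sq (mul_nonneg (sin_angle_nonneg' u v) (norm_nonneg _))

/-- `‖u - v‖ ≥ sin (angle u v) * ‖u‖` for `v ≠ 0`. -/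
private lemma sin_mul_norm_le_norm_sub {u v : V} (hv : v ≠ 0) :
    Real.sin (angle u v) * ‖u‖ ≤ ‖u - v‖ := by
  have hv2 : (0:ℝ) < ‖v‖^2 := by
    have := norm_pos_iff.mpr hv
    positivity
  have hsq : (Real.sin (angle u v) * ‖u‖)^2 ≤ ‖u - v‖^2 := by
    have h1 : ‖u - v‖^2 = ‖u‖^2 - 2 * ⟪u, v⟫ + ‖v‖^2 := norm_sub_sq_real u v
    have h2 := sinsq_identity u v
    rw [mul_pow, h1]
    nlinarith [sq_nonneg (‖v‖^2 - ⟪u, v⟫), h2, hv2]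
  calc Real.sin (angle u v) * ‖u‖ = Real.sqrt ((Real.sin (angle u v) * ‖u‖)^2) :=
        (Real.sqrt_sq (mul_nonneg (sin_angle_nonneg' u v) (norm_nonneg _))).symm
    _ ≤ Real.sqrt (‖u - v‖^2) := Real.sqrt_le_sqrt hsq
    _ = ‖u - v‖ := Real.sqrt_sq (norm_nonneg _)

private lemma angleSS_bddBelow (E F : Submodule ℝ V) :
    BddBelow {θ : ℝ | ∃ u ∈ E, ∃ v ∈ F, u ≠ 0 ∧ v ≠ 0 ∧ θ = angle u v} := by
  refine ⟨0, ?_⟩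
  rintro θ ⟨u, -, v, -, -, -, rfl⟩
  exact angle_nonneg u v

private lemma angleSS_nonneg (E F : Submodule ℝ V) : 0 ≤ angleSS E F := by
  apply Real.sInf_nonneg
  rintro θ ⟨u, -, v, -, -, -, rfl⟩
  exact angle_nonneg u v

/-- Key monotonicity: the sine of the infimum angle is at most the sine of any witness angle. -/
private lemma sin_angleSS_le {E F : Submodule ℝ V} {x y : V}
    (hx : x ∈ E) (hy : y ∈ F) (hx0 : x ≠ 0) (hy0 : y ≠ 0) :
    Real.sin (angleSS E F) ≤ Real.sin (angle x y) := by
  have hbdd := angleSS_bddBelow E F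
  have h1 : angleSS E F ≤ angle x y := csInf_le hbdd ⟨x, hx, y, hy, hx0, hy0, rfl⟩
  have h2 : angleSS E F ≤ Real.pi - angle x y := by
    have := csInf_le hbdd ⟨x, hx, -y, neg_mem hy, hx0, neg_ne_zero.2 hy0, rfl⟩
    rwa [angle_neg_right] at this
  have h0 : 0 ≤ angleSS E F := angleSS_nonneg E F
  have hmono := Real.strictMonoOn_sin.monotoneOn
  rcases le_total (angle x y) (Real.pi / 2) with h | h
  · exact hmono ⟨by linarith [Real.pi_pos], by linarith⟩
      ⟨by linarith [Real.pi_pos], h⟩ h1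
  · rw [show Real.sin (angle x y) = Real.sin (Real.pi - angle x y) from
      (Real.sin_pi_sub _).symm]
    exact hmono ⟨by linarith [Real.pi_pos], by linarith⟩
      ⟨by linarith [Real.pi_pos, angle_le_pi x y], by linarith⟩ h2

/-- `‖x - y‖ ≥ sin (angleSS E F) * ‖x‖` for nonzero `x ∈ E` and any `y ∈ F`. -/
private lemma norm_sub_ge_sin_angleSS {E F : Submodule ℝ V} {x y : V}
    (hx : x ∈ E) (hx0 : x ≠ 0) (hy : y ∈ F) :
    Real.sin (angleSS E F) * ‖x‖ ≤ ‖x - y‖ := by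
  rcases eq_or_ne y 0 with rfl | hy0
  · rw [sub_zero]
    calc Real.sin (angleSS E F) * ‖x‖ ≤ 1 * ‖x‖ :=
          mul_le_mul_of_nonneg_right (Real.sin_le_one _) (norm_nonneg _)
      _ = ‖x‖ := one_mul _
  · calc Real.sin (angleSS E F) * ‖x‖ ≤ Real.sin (angle x y) * ‖x‖ :=
        mul_le_mul_of_nonneg_right (sin_angleSS_le hx hy hx0 hy0) (norm_nonneg _)
      _ ≤ ‖x - y‖ := sin_mul_norm_le_norm_sub hy0

end Aux

theorem stmt1 {d : ℕ} (A B C : Submodule ℝ (EuclideanSpace ℝ (Fin d)))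
    (hA : A ≠ ⊥) (hB : B ≠ ⊥) (hC : C ≠ ⊥) :
    Real.sin (angleSS A B) * Real.sin (angleSS (A ⊔ B) C) ≤ Real.sin (angleSS A (B ⊔ C)) := by
  set s1 := Real.sin (angleSS A B) with hs1
  set s2 := Real.sin (angleSS (A ⊔ B) C) with hs2
  set S := {θ : ℝ | ∃ u ∈ A, ∃ v ∈ B ⊔ C, u ≠ 0 ∧ v ≠ 0 ∧ θ = angle u v} with hS
  -- s2 is nonneg
  obtain ⟨c0, hc0C, hc00⟩ := Submodule.exists_mem_ne_zero_of_ne_bot hC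
  obtain ⟨a0, ha0A, ha00⟩ := Submodule.exists_mem_ne_zero_of_ne_bot hA
  obtain ⟨b0, hb0B, hb00⟩ := Submodule.exists_mem_ne_zero_of_ne_bot hB
  have hs2nn : 0 ≤ s2 := by
    apply Real.sin_nonneg_of_nonneg_of_le_pi (angleSS_nonneg _ _)
    exact le_trans (csInf_le (angleSS_bddBelow _ _)
      ⟨a0, Submodule.mem_sup_left ha0A, c0, hc0C, ha00, hc00, rfl⟩) (angle_le_pi a0 c0)
  -- the pointwise bound on every element of S
  have hKS : S ⊆ {θ : ℝ | s1 * s2 ≤ Real.sin θ} := by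
    rintro θ ⟨u, huA, v, hv, hu0, hv0, rfl⟩
    have hu : (0:ℝ) < ‖u‖ := norm_pos_iff.2 hu0
    -- projection of u onto the line through v
    set t : ℝ := (inner ℝ u v : ℝ) / ‖v‖^2 with ht
    have hw : t • v ∈ B ⊔ C := Submodule.smul_mem _ t hv
    obtain ⟨b, hb, c, hc, hbc⟩ := Submodule.mem_sup.1 hw
    by_cases hub : u - b = 0
    · -- then u ∈ A ∩ B, so s1 = 0
      have hubB : u ∈ B := by rwa [sub_eq_zero.1 hub]
      have h0 : angleSS A B ≤ 0 := by
        have := csInf_le (angleSS_bddBelow A B) ⟨u, huA, u, hubB, hu0, hu0, rfl⟩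
        rwa [angle_self hu0] at this
      have : angleSS A B = 0 := le_antisymm h0 (angleSS_nonneg A B)
      simp only [Set.mem_setOf_eq, hs1, this, Real.sin_zero, zero_mul]
      exact sin_angle_nonneg' u v
    · have h1 : s1 * ‖u‖ ≤ ‖u - b‖ := norm_sub_ge_sin_angleSS huA hu0 hb
      have h2 : s2 * ‖u - b‖ ≤ ‖(u - b) - c‖ :=
        norm_sub_ge_sin_angleSS (Submodule.sub_mem _ (Submodule.mem_sup_left huA)
          (Submodule.mem_sup_right hb)) hub hc
      have h3 : ‖u - t • v‖ ≤ Real.sin (angle u v) * ‖u‖ := norm_sub_proj_le hv0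
      have heq : (u - b) - c = u - t • v := by rw [← hbc]; abel
      have : s1 * s2 * ‖u‖ ≤ Real.sin (angle u v) * ‖u‖ := by
        calc s1 * s2 * ‖u‖ = s2 * (s1 * ‖u‖) := by ring
          _ ≤ s2 * ‖u - b‖ := mul_le_mul_of_nonneg_left h1 hs2nn
          _ ≤ ‖(u - b) - c‖ := h2
          _ = ‖u - t • v‖ := by rw [heq]
          _ ≤ Real.sin (angle u v) * ‖u‖ := h3
      exact le_of_mul_le_mul_right (by simpa [mul_comm] using this) hu
  -- pass to the infimum using continuity of sin
  have hSne : S.Nonempty :=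
    ⟨angle a0 b0, a0, ha0A, b0, Submodule.mem_sup_left hb0B, ha00, hb00, rfl⟩
  have hmem : sInf S ∈ closure S := csInf_mem_closure hSne (angleSS_bddBelow A (B ⊔ C))
  have hclosed : IsClosed {θ : ℝ | s1 * s2 ≤ Real.sin θ} :=
    isClosed_le continuous_const Real.continuous_sin
  exact hclosed.closure_subset_iff.2 hKS hmem
end

section
/- Let L : ℝ^d → ℝ^d be an invertible linear map and let v, w be nonzero vectors in ℝ^d. Then 𝐦(L) · sin ∠(v,w) ≤ ‖L‖ · sin ∠(Lv, Lw) and 𝐦(L) · sin ∠(Lv, Lw) ≤ ‖L‖ · sin ∠(v,w). Equivalently, if v and w are linearly independent, then 𝐦(L)/‖L‖ ≤ sin ∠(Lv,Lw) / sin ∠(v,w) ≤ ‖L‖/𝐦(L). -/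
open InnerProductGeometry

/-- The co-norm (minimum norm) of an invertible continuous linear map:
`𝐦(L) = ‖L⁻¹‖⁻¹`. -/
noncomputable def conorm {E F : Type*} [NormedAddCommGroup E] [NormedSpace ℝ E]
    [NormedAddCommGroup F] [NormedSpace ℝ F] (L : E ≃L[ℝ] F) : ℝ :=
  ‖(L.symm : F →L[ℝ] E)‖⁻¹

open RealInnerProductSpace

variable {V : Type*} [NormedAddCommGroup V] [InnerProductSpace ℝ V]

lemma sin_nonneg_angle (x y : V) : 0 ≤ Real.sin (angle x y) :=
  Real.sin_nonneg_of_nonneg_of_le_pi (angle_nonneg x y) (angle_le_pi x y)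

lemma sin_key (x y : V) (hy : y ≠ 0) :
    Real.sin (angle x y) * ‖x‖ = ‖x - (⟪x, y⟫ / ‖y‖ ^ 2) • y‖ := by
  have hy0 : (0:ℝ) < ‖y‖ := norm_pos_iff.mpr hy
  have h := sin_angle_mul_norm_mul_norm x y
  have hinner : ⟪y, y⟫ = ‖y‖ ^ 2 := real_inner_self_eq_norm_sq y
  have hnn : (0:ℝ) ≤ ⟪x, x⟫ * ⟪y, y⟫ - ⟪x, y⟫ * ⟪x, y⟫ := by
    have := real_inner_mul_inner_self_le x y
    nlinarith [real_inner_self_eq_norm_sq x, norm_nonneg x, norm_nonneg y]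
  have hexp : ‖x - (⟪x, y⟫ / ‖y‖ ^ 2) • y‖ ^ 2 * ‖y‖ ^ 2
      = ⟪x, x⟫ * ⟪y, y⟫ - ⟪x, y⟫ * ⟪x, y⟫ := by
    rw [← real_inner_self_eq_norm_sq]
    simp only [inner_sub_left, inner_sub_right, real_inner_smul_left, real_inner_smul_right]
    rw [real_inner_comm y x, hinner]
    field_simp
    ring
  have h2 : (Real.sin (angle x y) * ‖x‖ * ‖y‖) ^ 2
      = ‖x - (⟪x, y⟫ / ‖y‖ ^ 2) • y‖ ^ 2 * ‖y‖ ^ 2 := by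
    rw [mul_assoc, h, Real.sq_sqrt hnn, hexp]
  have h3 := congrArg Real.sqrt h2
  rw [show ‖x - (⟪x, y⟫ / ‖y‖ ^ 2) • y‖ ^ 2 * ‖y‖ ^ 2
      = (‖x - (⟪x, y⟫ / ‖y‖ ^ 2) • y‖ * ‖y‖) ^ 2 by ring] at h3
  rw [Real.sqrt_sq (mul_nonneg (mul_nonneg (sin_nonneg_angle x y) (norm_nonneg x)) hy0.le),
    Real.sqrt_sq (mul_nonneg (norm_nonneg _) hy0.le)] at h3
  exact mul_right_cancel₀ (ne_of_gt hy0) h3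

lemma sin_le (x y : V) (hy : y ≠ 0) (t : ℝ) :
    Real.sin (angle x y) * ‖x‖ ≤ ‖x - t • y‖ := by
  rw [sin_key x y hy]
  have hy2 : (0:ℝ) < ‖y‖ ^ 2 := pow_pos (norm_pos_iff.mpr hy) 2
  have hinner : ⟪y, y⟫ = ‖y‖ ^ 2 := real_inner_self_eq_norm_sq y
  have hd : ⟪x, y⟫ / ‖y‖ ^ 2 * ‖y‖ ^ 2 = ⟪x, y⟫ := div_mul_cancel₀ _ (ne_of_gt hy2)
  have key : ⟪x - (⟪x, y⟫ / ‖y‖ ^ 2) • y, x - (⟪x, y⟫ / ‖y‖ ^ 2) • y⟫ ≤ ⟪x - t • y, x - t • y⟫ := by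
    simp only [inner_sub_left, inner_sub_right, real_inner_smul_left, real_inner_smul_right,
      real_inner_comm y x, hinner]
    have ht : t * (⟪y, x⟫ / ‖y‖ ^ 2) * ‖y‖ ^ 2 = t * ⟪y, x⟫ := by
      field_simp
    have hdd : (⟪y, x⟫ / ‖y‖ ^ 2) * ((⟪y, x⟫ / ‖y‖ ^ 2) * ‖y‖ ^ 2)
        = (⟪y, x⟫ / ‖y‖ ^ 2) * ⟪y, x⟫ := by
      field_simp
    nlinarith [mul_nonneg (sq_nonneg (t - ⟪y, x⟫ / ‖y‖ ^ 2)) hy2.le,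
      div_mul_cancel₀ (⟪y, x⟫) (ne_of_gt hy2), ht, hdd]
  have h1 := key
  rw [real_inner_self_eq_norm_sq, real_inner_self_eq_norm_sq] at h1
  have := Real.sqrt_le_sqrt h1
  rwa [Real.sqrt_sq (norm_nonneg _), Real.sqrt_sq (norm_nonneg _)] at this

lemma map_ne_zero' {V W : Type*} [NormedAddCommGroup V] [NormedSpace ℝ V]
    [NormedAddCommGroup W] [NormedSpace ℝ W] (L : V ≃L[ℝ] W) {x : V} (hx : x ≠ 0) :
    L x ≠ 0 := by
  intro h
  apply hx
  have := congrArg L.symm h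
  simpa using this

lemma conorm_mul_norm_le {V W : Type*} [NormedAddCommGroup V] [NormedSpace ℝ V]
    [NormedAddCommGroup W] [NormedSpace ℝ W] (L : V ≃L[ℝ] W) (x : V) :
    conorm L * ‖x‖ ≤ ‖L x‖ := by
  unfold conorm
  rcases eq_or_lt_of_le (norm_nonneg (L.symm : W →L[ℝ] V)) with h | h
  · rw [← h]; simp [norm_nonneg]
  · rw [inv_mul_le_iff₀ h]
    calc ‖x‖ = ‖(L.symm : W →L[ℝ] V) (L x)‖ := by simp
    _ ≤ ‖(L.symm : W →L[ℝ] V)‖ * ‖L x‖ := (L.symm : W →L[ℝ] V).le_opNorm _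

lemma main_aux {V W : Type*} [NormedAddCommGroup V] [InnerProductSpace ℝ V]
    [NormedAddCommGroup W] [InnerProductSpace ℝ W] (L : V ≃L[ℝ] W) (v w : V)
    (hv : v ≠ 0) (hw : w ≠ 0) :
    conorm L * Real.sin (angle v w) ≤ ‖(L : V →L[ℝ] W)‖ * Real.sin (angle (L v) (L w)) := by
  have hv' : L v ≠ 0 := map_ne_zero' L hv
  have hw' : L w ≠ 0 := map_ne_zero' L hw
  have hvn : (0:ℝ) < ‖v‖ := norm_pos_iff.mpr hv
  set t₀ : ℝ := ⟪L v, L w⟫ / ‖L w‖ ^ 2 with ht₀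
  have e1 : Real.sin (angle (L v) (L w)) * ‖L v‖ = ‖L v - t₀ • L w‖ := sin_key (L v) (L w) hw'
  have e2 : L v - t₀ • L w = L (v - t₀ • w) := by
    simp [map_sub, map_smul]
  have e3 : conorm L * ‖v - t₀ • w‖ ≤ ‖L (v - t₀ • w)‖ := conorm_mul_norm_le L _
  have e4 : Real.sin (angle v w) * ‖v‖ ≤ ‖v - t₀ • w‖ := sin_le v w hw t₀
  have e5 : conorm L * (Real.sin (angle v w) * ‖v‖) ≤ Real.sin (angle (L v) (L w)) * ‖L v‖ := by
    rw [e1, e2]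
    calc conorm L * (Real.sin (angle v w) * ‖v‖) ≤ conorm L * ‖v - t₀ • w‖ := by
          apply mul_le_mul_of_nonneg_left e4
          exact inv_nonneg.mpr (norm_nonneg _)
      _ ≤ ‖L (v - t₀ • w)‖ := e3
  have e6 : Real.sin (angle (L v) (L w)) * ‖L v‖
      ≤ Real.sin (angle (L v) (L w)) * (‖(L : V →L[ℝ] W)‖ * ‖v‖) :=
    mul_le_mul_of_nonneg_left ((L : V →L[ℝ] W).le_opNorm v) (sin_nonneg_angle _ _)
  have := e5.trans e6
  exact le_of_mul_le_mul_right (by linarith) hvn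
theorem stmt2 {d : ℕ}
    (L : EuclideanSpace ℝ (Fin d) ≃L[ℝ] EuclideanSpace ℝ (Fin d))
    (v w : EuclideanSpace ℝ (Fin d)) (hv : v ≠ 0) (hw : w ≠ 0) :
    conorm L * Real.sin (angle v w)
        ≤ ‖(L : EuclideanSpace ℝ (Fin d) →L[ℝ] EuclideanSpace ℝ (Fin d))‖ *
            Real.sin (angle (L v) (L w)) ∧
    conorm L * Real.sin (angle (L v) (L w))
        ≤ ‖(L : EuclideanSpace ℝ (Fin d) →L[ℝ] EuclideanSpace ℝ (Fin d))‖ *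
            Real.sin (angle v w) := by
  refine ⟨main_aux L v w hv hw, ?_⟩
  have hv' : L v ≠ 0 := map_ne_zero' L hv
  have hw' : L w ≠ 0 := map_ne_zero' L hw
  have h := main_aux L.symm (L v) (L w) hv' hw'
  simp only [ContinuousLinearEquiv.symm_apply_apply] at h
  unfold conorm at h ⊢
  simp only [ContinuousLinearEquiv.symm_symm] at h
  have ha : 0 < ‖(L : EuclideanSpace ℝ (Fin d) →L[ℝ] EuclideanSpace ℝ (Fin d))‖ := by
    have h0 := (L : EuclideanSpace ℝ (Fin d) →L[ℝ] EuclideanSpace ℝ (Fin d)).le_opNorm v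
    simp only [ContinuousLinearEquiv.coe_coe] at h0
    nlinarith [norm_pos_iff.mpr hv', norm_nonneg v, norm_nonneg (L : EuclideanSpace ℝ (Fin d) →L[ℝ] EuclideanSpace ℝ (Fin d))]
  have hb : 0 < ‖(L.symm : EuclideanSpace ℝ (Fin d) →L[ℝ] EuclideanSpace ℝ (Fin d))‖ := by
    have h0 := (L.symm : EuclideanSpace ℝ (Fin d) →L[ℝ] EuclideanSpace ℝ (Fin d)).le_opNorm (L v)
    simp only [ContinuousLinearEquiv.coe_coe, ContinuousLinearEquiv.symm_apply_apply] at h0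
    nlinarith [norm_pos_iff.mpr hv, norm_nonneg (L v)]
  rw [inv_mul_le_iff₀ hb]
  rw [inv_mul_le_iff₀ ha] at h
  linarith
end

section
/- Let L : ℝ² → ℝ² be an invertible linear map and let v, w ∈ ℝ² be linearly independent unit vectors. Then ‖L‖/𝐦(L) ≤ 4 · max{‖Lv‖/‖Lw‖, ‖Lw‖/‖Lv‖} · (sin ∠(v,w))⁻¹ · (sin ∠(Lv,Lw))⁻¹. -/
open InnerProductGeometry

open RealInnerProductSpace in

lemma key_coeff {E : Type*} [NormedAddCommGroup E] [InnerProductSpace ℝ E]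
    {v w u : E} (hv : v ≠ 0) {a b : ℝ} (h : u = a • v + b • w) :
    |b| * (‖w‖ * Real.sin (angle v w)) ≤ ‖u‖ := by
  by_cases hw : w = 0
  · simp [hw]
  have hvn : ‖v‖ ≠ 0 := norm_ne_zero_iff.mpr hv
  have hwn : ‖w‖ ≠ 0 := norm_ne_zero_iff.mpr hw
  set c : ℝ := (⟪w, v⟫) / (‖v‖ ^ 2) with hc
  set p : E := w - c • v with hp
  have hvp : ⟪v, p⟫ = 0 := by
    simp only [hp, inner_sub_right, inner_smul_right, hc, real_inner_self_eq_norm_sq]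
    field_simp [real_inner_comm v w]
    linarith [real_inner_comm v w]
  have hsq : ‖p‖ ^ 2 = ‖w‖ ^ 2 - ⟪w, v⟫ ^ 2 / ‖v‖ ^ 2 := by
    rw [← real_inner_self_eq_norm_sq]
    simp only [hp, inner_sub_left, inner_sub_right, inner_smul_left, inner_smul_right,
      real_inner_self_eq_norm_sq, RCLike.star_def, conj_trivial, real_inner_comm v w]
    field_simp [hc, real_inner_comm v w]
    rw [hc, real_inner_comm v w]
    field_simp
    ring
  have hsin : Real.sin (angle v w) ^ 2 = 1 - (⟪v, w⟫ / (‖v‖ * ‖w‖)) ^ 2 := by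
    rw [Real.sin_sq, cos_angle]
  have hnp : ‖p‖ = ‖w‖ * Real.sin (angle v w) := by
    have h2 : (‖w‖ * Real.sin (angle v w)) ^ 2 = ‖p‖ ^ 2 := by
      rw [hsq, mul_pow, hsin, real_inner_comm v w]
      field_simp
    have hnn : 0 ≤ ‖w‖ * Real.sin (angle v w) :=
      mul_nonneg (norm_nonneg _) (Real.sin_nonneg_of_nonneg_of_le_pi (angle_nonneg _ _) (angle_le_pi _ _))
    calc ‖p‖ = Real.sqrt (‖p‖ ^ 2) := (Real.sqrt_sq (norm_nonneg p)).symm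
      _ = Real.sqrt ((‖w‖ * Real.sin (angle v w)) ^ 2) := by rw [h2]
      _ = ‖w‖ * Real.sin (angle v w) := Real.sqrt_sq hnn
  have hwp : ⟪w, p⟫ = ‖p‖ ^ 2 := by
    have hw' : w = p + c • v := by rw [hp]; abel
    rw [hw', inner_add_left, inner_smul_left, hvp, real_inner_self_eq_norm_sq]
    simp
  have hup : ⟪u, p⟫ = b * ‖p‖ ^ 2 := by
    rw [h, inner_add_left, inner_smul_left, inner_smul_left, hvp, hwp]
    try simp
  have hcs : |b| * ‖p‖ ^ 2 ≤ ‖u‖ * ‖p‖ := by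
    calc |b| * ‖p‖ ^ 2 = |⟪u, p⟫| := by rw [hup, abs_mul, abs_of_nonneg (sq_nonneg ‖p‖)]
      _ ≤ ‖u‖ * ‖p‖ := abs_real_inner_le_norm u p
  rw [← hnp]
  rcases eq_or_lt_of_le (norm_nonneg p) with h0 | h0
  · rw [← h0]; simp
  · have := le_of_mul_le_mul_right (by nlinarith : |b| * ‖p‖ * ‖p‖ ≤ ‖u‖ * ‖p‖) h0
    exact this

open RealInnerProductSpace in
lemma sin_angle_pos' {E : Type*} [NormedAddCommGroup E] [InnerProductSpace ℝ E]
    {v w : E} (h : LinearIndependent ℝ ![v, w]) : 0 < Real.sin (angle v w) := by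
  have hv : v ≠ 0 := by
    have := h.ne_zero 0; simpa using this
  have hne : ∀ r : ℝ, r • v ≠ w := (LinearIndependent.pair_iff' hv).mp h
  apply Real.sin_pos_of_pos_of_lt_pi
  · rcases (angle_nonneg v w).lt_or_eq with h0 | h0
    · exact h0
    · exfalso
      obtain ⟨-, r, -, hr⟩ := angle_eq_zero_iff.mp h0.symm
      exact hne r hr.symm
  · rcases (angle_le_pi v w).lt_or_eq with h0 | h0
    · exact h0
    · exfalso
      obtain ⟨-, r, -, hr⟩ := angle_eq_pi_iff.mp h0
      exact hne r hr.symm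

local notation "E" => EuclideanSpace ℝ (Fin 2)

set_option maxHeartbeats 1000000 in
theorem stmt4
    (L : EuclideanSpace ℝ (Fin 2) ≃L[ℝ] EuclideanSpace ℝ (Fin 2))
    (v w : EuclideanSpace ℝ (Fin 2)) (hv : ‖v‖ = 1) (hw : ‖w‖ = 1)
    (hindep : LinearIndependent ℝ ![v, w]) :
    ‖(L : EuclideanSpace ℝ (Fin 2) →L[ℝ] EuclideanSpace ℝ (Fin 2))‖ / conorm L ≤
      4 * max (‖L v‖ / ‖L w‖) (‖L w‖ / ‖L v‖) *
        (Real.sin (angle v w))⁻¹ * (Real.sin (angle (L v) (L w)))⁻¹ := by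
  have hvne : v ≠ 0 := by intro h; rw [h, norm_zero] at hv; norm_num at hv
  have hwne : w ≠ 0 := by intro h; rw [h, norm_zero] at hw; norm_num at hw
  have hLvne : L v ≠ 0 := by
    intro h
    exact hvne (L.injective (by simpa using h))
  have hLwne : L w ≠ 0 := by
    intro h
    exact hwne (L.injective (by simpa using h))
  have ha : (0:ℝ) < ‖L v‖ := norm_pos_iff.mpr hLvne
  have hb : (0:ℝ) < ‖L w‖ := norm_pos_iff.mpr hLwne
  have hindep' : LinearIndependent ℝ ![L v, L w] := by
    have h1 : LinearIndependent ℝ ((L.toLinearEquiv : E →ₗ[ℝ] E) ∘ ![v, w]) :=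
      hindep.map' _ L.toLinearEquiv.ker
    have h2 : ((L.toLinearEquiv : E →ₗ[ℝ] E) ∘ ![v, w]) = ![L v, L w] := by
      funext i; fin_cases i <;> rfl
    rwa [h2] at h1
  have hs : 0 < Real.sin (angle v w) := sin_angle_pos' hindep
  have hs' : 0 < Real.sin (angle (L v) (L w)) := sin_angle_pos' hindep'
  have hcard : Fintype.card (Fin 2) = Module.finrank ℝ E := by
    simp [finrank_euclideanSpace]
  -- bound on ‖L‖
  have bound1 : ‖(L : E →L[ℝ] E)‖ ≤ 2 * max ‖L v‖ ‖L w‖ / Real.sin (angle v w) := by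
    apply ContinuousLinearMap.opNorm_le_bound _ (by positivity)
    intro u
    set B := basisOfLinearIndependentOfCardEqFinrank hindep hcard with hB
    have hB0 : B 0 = v := by rw [hB, coe_basisOfLinearIndependentOfCardEqFinrank]; rfl
    have hB1 : B 1 = w := by rw [hB, coe_basisOfLinearIndependentOfCardEqFinrank]; rfl
    set α := B.repr u 0 with hα
    set β := B.repr u 1 with hβ
    have hu : u = α • v + β • w := by
      have h0 := B.sum_repr u
      rw [Fin.sum_univ_two, hB0, hB1] at h0
      exact h0.symm
    have h1 : |α| * Real.sin (angle v w) ≤ ‖u‖ := by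
      have := key_coeff hwne (u := u) (a := β) (b := α)
        (by rw [hu]; rw [add_comm])
      rwa [hv, one_mul, angle_comm w v] at this
    have h2 : |β| * Real.sin (angle v w) ≤ ‖u‖ := by
      have := key_coeff hvne (u := u) (a := α) (b := β) hu
      rwa [hw, one_mul] at this
    have hLu : (L : E →L[ℝ] E) u = α • L v + β • L w := by
      simp only [ContinuousLinearEquiv.coe_coe]
      rw [hu, map_add, map_smul, map_smul]
    rw [hLu]
    calc ‖α • L v + β • L w‖ ≤ ‖α • L v‖ + ‖β • L w‖ := norm_add_le _ _
      _ = |α| * ‖L v‖ + |β| * ‖L w‖ := by rw [norm_smul, norm_smul]; simp [Real.norm_eq_abs]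
      _ ≤ 2 * max ‖L v‖ ‖L w‖ / Real.sin (angle v w) * ‖u‖ := by
          rw [div_mul_eq_mul_div, le_div_iff₀ hs]
          nlinarith [le_max_left ‖L v‖ ‖L w‖, le_max_right ‖L v‖ ‖L w‖,
            abs_nonneg α, abs_nonneg β, ha.le, hb.le, norm_nonneg u,
            mul_le_mul_of_nonneg_right h1 (le_max_left ‖L v‖ ‖L w‖ |>.trans_lt' ha |>.le),
            mul_le_mul_of_nonneg_left (le_max_left ‖L v‖ ‖L w‖) (abs_nonneg α),
            mul_le_mul_of_nonneg_left (le_max_right ‖L v‖ ‖L w‖) (abs_nonneg β)]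
  -- bound on ‖L.symm‖
  have bound2 : ‖(L.symm : E →L[ℝ] E)‖ ≤
      2 / (min ‖L v‖ ‖L w‖ * Real.sin (angle (L v) (L w))) := by
    have hmin : 0 < min ‖L v‖ ‖L w‖ := lt_min ha hb
    apply ContinuousLinearMap.opNorm_le_bound _ (by positivity)
    intro u
    set B := basisOfLinearIndependentOfCardEqFinrank hindep' hcard with hB
    have hB0 : B 0 = L v := by rw [hB, coe_basisOfLinearIndependentOfCardEqFinrank]; rfl
    have hB1 : B 1 = L w := by rw [hB, coe_basisOfLinearIndependentOfCardEqFinrank]; rfl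
    set γ := B.repr u 0 with hγ
    set δ := B.repr u 1 with hδ
    have hu : u = γ • L v + δ • L w := by
      have h0 := B.sum_repr u
      rw [Fin.sum_univ_two, hB0, hB1] at h0
      exact h0.symm
    have h1 : |γ| * (‖L v‖ * Real.sin (angle (L v) (L w))) ≤ ‖u‖ := by
      have := key_coeff hLwne (u := u) (a := δ) (b := γ) (by rw [hu]; rw [add_comm])
      rwa [angle_comm (L w) (L v)] at this
    have h2 : |δ| * (‖L w‖ * Real.sin (angle (L v) (L w))) ≤ ‖u‖ :=
      key_coeff hLvne (u := u) (a := γ) (b := δ) hu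
    have hLu : (L.symm : E →L[ℝ] E) u = γ • v + δ • w := by
      simp only [ContinuousLinearEquiv.coe_coe]
      rw [hu, map_add, map_smul, map_smul]
      simp
    rw [hLu]
    calc ‖γ • v + δ • w‖ ≤ ‖γ • v‖ + ‖δ • w‖ := norm_add_le _ _
      _ = |γ| + |δ| := by rw [norm_smul, norm_smul, hv, hw]; simp [Real.norm_eq_abs]
      _ ≤ 2 / (min ‖L v‖ ‖L w‖ * Real.sin (angle (L v) (L w))) * ‖u‖ := by
          rw [div_mul_eq_mul_div, le_div_iff₀ (by positivity)]
          nlinarith [min_le_left ‖L v‖ ‖L w‖, min_le_right ‖L v‖ ‖L w‖,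
            abs_nonneg γ, abs_nonneg δ, norm_nonneg u, hs'.le, ha.le, hb.le,
            mul_le_mul_of_nonneg_right (min_le_left ‖L v‖ ‖L w‖)
              (mul_nonneg (abs_nonneg γ) hs'.le),
            mul_le_mul_of_nonneg_right (min_le_right ‖L v‖ ‖L w‖)
              (mul_nonneg (abs_nonneg δ) hs'.le)]
  -- combine
  have hMm : max (‖L v‖ / ‖L w‖) (‖L w‖ / ‖L v‖) = max ‖L v‖ ‖L w‖ / min ‖L v‖ ‖L w‖ := by
    rcases le_total ‖L v‖ ‖L w‖ with h | h
    · rw [max_eq_right h, min_eq_left h, max_eq_right]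
      rw [div_le_div_iff₀ hb ha]
      nlinarith
    · rw [max_eq_left h, min_eq_right h, max_eq_left]
      rw [div_le_div_iff₀ ha hb]
      nlinarith
  have hccc : conorm L = ‖(L.symm : E →L[ℝ] E)‖⁻¹ := rfl
  rw [hccc, div_eq_mul_inv, inv_inv, hMm]
  calc ‖(L : E →L[ℝ] E)‖ * ‖(L.symm : E →L[ℝ] E)‖
      ≤ (2 * max ‖L v‖ ‖L w‖ / Real.sin (angle v w)) *
        (2 / (min ‖L v‖ ‖L w‖ * Real.sin (angle (L v) (L w)))) := by
        apply mul_le_mul bound1 bound2 (norm_nonneg _) (by positivity)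
    _ = 4 * (max ‖L v‖ ‖L w‖ / min ‖L v‖ ‖L w‖) *
        (Real.sin (angle v w))⁻¹ * (Real.sin (angle (L v) (L w)))⁻¹ := by
        have hmin : (0:ℝ) < min ‖L v‖ ‖L w‖ := lt_min ha hb
        field_simp
        ring
end

section
/- Let V be a real inner product space of finite dimension 2q, ω a nondegenerate alternating bilinear form on V, J : V → V the invertible linear map with ω(v,w) = ⟨Jv,w⟩ for all v,w, and C ≥ max(‖J‖, ‖J⁻¹‖). Let E, F ⊂ V be Lagrangian subspaces with E ∩ F = {0}, and set α = ∠(E,F). Then for every v ∈ E \ {0} there exists w ∈ F \ {0} such that |ω(v,w)| ≥ C⁻¹ · sin α · ‖v‖ · ‖w‖. -/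
open InnerProductGeometry RealInnerProductSpace

theorem stmt5 {V : Type*} [NormedAddCommGroup V] [InnerProductSpace ℝ V]
    [FiniteDimensional ℝ V] (q : ℕ) (hdim : Module.finrank ℝ V = 2 * q)
    (ω : LinearMap.BilinForm ℝ V)
    (halt : ∀ v, ω v v = 0) (hnd : ω.Nondegenerate)
    (J : V ≃L[ℝ] V) (hJ : ∀ v w, ω v w = ⟪J v, w⟫)
    (C : ℝ) (hC : max ‖(J : V →L[ℝ] V)‖ ‖(J.symm : V →L[ℝ] V)‖ ≤ C)
    (E F : Submodule ℝ V)
    (hE : E = ω.orthogonal E) (hF : F = ω.orthogonal F)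
    (hEF : E ⊓ F = ⊥)
    (α : ℝ) (hα : α = angleSS E F)
    (v : V) (hvE : v ∈ E) (hv : v ≠ 0) :
    ∃ w ∈ F, w ≠ 0 ∧ C⁻¹ * Real.sin α * ‖v‖ * ‖w‖ ≤ |ω v w| := by
  have hrefl : ω.IsRefl := LinearMap.IsAlt.isRefl halt
  -- dimensions
  have hdE : Module.finrank ℝ E = q := by
    have := LinearMap.BilinForm.finrank_orthogonal hnd E
    rw [← hE, hdim] at this
    have h2 : Module.finrank ℝ E ≤ 2 * q := hdim ▸ Submodule.finrank_le E
    omega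
  have hdF : Module.finrank ℝ F = q := by
    have := LinearMap.BilinForm.finrank_orthogonal hnd F
    rw [← hF, hdim] at this
    have h2 : Module.finrank ℝ F ≤ 2 * q := hdim ▸ Submodule.finrank_le F
    omega
  have hsup : E ⊔ F = ⊤ := by
    apply Submodule.eq_top_of_finrank_eq
    have := Submodule.finrank_sup_add_finrank_inf_eq E F
    rw [hEF, hdE, hdF, finrank_bot, add_zero] at this
    rw [this, hdim]; ring
  -- α is a lower bound for all angles between E and F
  have hSbdd : BddBelow {θ : ℝ | ∃ u ∈ E, ∃ v ∈ F, u ≠ 0 ∧ v ≠ 0 ∧ θ = angle u v} := by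
    refine ⟨0, ?_⟩
    rintro θ ⟨u, -, w, -, -, -, rfl⟩
    exact angle_nonneg u w
  have hαle : ∀ u ∈ E, ∀ w ∈ F, u ≠ 0 → w ≠ 0 → α ≤ angle u w := by
    intro u hu w hw hu0 hw0
    rw [hα]
    exact csInf_le hSbdd ⟨u, hu, w, hw, hu0, hw0, rfl⟩
  -- a nonzero element of F
  have hq0 : q ≠ 0 := by
    intro h
    rw [h, mul_zero] at hdim
    have : Subsingleton V := Module.finrank_zero_iff.mp hdim
    exact hv (Subsingleton.elim v 0)
  obtain ⟨f0, hf0F, hf00⟩ : ∃ f ∈ F, f ≠ 0 := by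
    have hFne : F ≠ ⊥ := fun h => hq0 (by rw [h, finrank_bot] at hdF; omega)
    obtain ⟨f, hf1, hf2⟩ := (Submodule.ne_bot_iff F).mp hFne
    exact ⟨f, hf1, hf2⟩
  -- α ∈ [0, π]
  have hα0 : 0 ≤ α := by
    rw [hα]
    refine le_csInf ⟨angle v f0, ⟨v, hvE, f0, hf0F, hv, hf00, rfl⟩⟩ ?_
    rintro θ ⟨u, -, w, -, -, -, rfl⟩
    exact angle_nonneg u w
  have hαπ : α ≤ Real.pi := (hαle v hvE f0 hf0F hv hf00).trans (angle_le_pi v f0)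
  have hsin : 0 ≤ Real.sin α := Real.sin_nonneg_of_nonneg_of_le_pi hα0 hαπ
  -- key inequality: sin α * ‖f‖ ≤ ‖e + f‖ for e ∈ E, f ∈ F
  have hkey : ∀ e ∈ E, ∀ f ∈ F, Real.sin α * ‖f‖ ≤ ‖e + f‖ := by
    intro e he f hf
    rcases eq_or_ne f 0 with rfl | hf0
    · simp
    rcases eq_or_ne e 0 with rfl | he0
    · simpa using mul_le_of_le_one_left (norm_nonneg f) (Real.sin_le_one α)
    have hpos : (0:ℝ) < ‖e‖ * ‖f‖ := by
      have := norm_pos_iff.mpr he0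
      have := norm_pos_iff.mpr hf0
      positivity
    have hcos : ⟪(-e), f⟫ ≤ Real.cos α * (‖e‖ * ‖f‖) := by
      have h1 : α ≤ angle (-e) f := hαle (-e) (E.neg_mem he) f hf (neg_ne_zero.mpr he0) hf0
      have h2 : Real.cos (angle (-e) f) ≤ Real.cos α :=
        Real.cos_le_cos_of_nonneg_of_le_pi hα0 (angle_le_pi _ _) h1
      have h3 : Real.cos (angle (-e) f) = ⟪(-e), f⟫ / (‖e‖ * ‖f‖) := by
        rw [cos_angle, norm_neg]
      have h4 := mul_le_mul_of_nonneg_right h2 hpos.le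
      rwa [h3, div_mul_cancel₀ _ hpos.ne'] at h4
    have hef : -(Real.cos α * (‖e‖ * ‖f‖)) ≤ ⟪e, f⟫ := by
      rw [inner_neg_left] at hcos
      linarith
    have hsq : (Real.sin α * ‖f‖) ^ 2 ≤ ‖e + f‖ ^ 2 := by
      have hexp : ‖e + f‖ ^ 2 = ‖e‖ ^ 2 + 2 * ⟪e, f⟫ + ‖f‖ ^ 2 := norm_add_sq_real e f
      have hs : Real.sin α ^ 2 = 1 - Real.cos α ^ 2 := Real.sin_sq α
      nlinarith [sq_nonneg (‖e‖ - Real.cos α * ‖f‖)]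
    have h1 : 0 ≤ Real.sin α * ‖f‖ := mul_nonneg hsin (norm_nonneg f)
    nlinarith [hsq, h1, norm_nonneg (e + f)]
  -- set up x = J v
  set x : V := J v with hx
  have hx0 : x ≠ 0 := by
    intro h
    rw [hx] at h
    exact hv (by simpa using congrArg J.symm h)
  have hxperpE : ∀ u ∈ E, ⟪x, u⟫ = 0 := by
    intro u hu
    rw [← hJ]
    rw [hE] at hu
    exact hu v hvE
  -- w = orthogonal projection of x on F
  set w : V := (F.orthogonalProjectionOnto x : V) with hw
  have hwF : w ∈ F := (F.orthogonalProjectionOnto x).2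
  have hinner_w : ∀ u ∈ F, ⟪x, u⟫ = ⟪w, u⟫ := by
    intro u hu
    have h0 := F.starProjection_inner_eq_zero x u hu
    rw [inner_sub_left, Submodule.starProjection_apply] at h0
    linarith
  -- decomposition of x
  obtain ⟨e, he, f, hf, hef⟩ := Submodule.mem_sup.mp (hsup ▸ Submodule.mem_top : x ∈ E ⊔ F)
  -- w ≠ 0
  have hw0 : w ≠ 0 := by
    intro h
    have hxF : ∀ u ∈ F, ⟪x, u⟫ = 0 := fun u hu => by rw [hinner_w u hu, h, inner_zero_left]
    have h5 : (0:ℝ) = ⟪x, x⟫ := by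
      simpa [inner_add_right, hxperpE e he, hxF f hf] using
        congrArg (fun y => (⟪x, y⟫ : ℝ)) hef
    exact hx0 (inner_self_eq_zero.mp h5.symm)
  -- ‖x‖² ≤ ‖w‖ * ‖f‖
  have hxsq : ‖x‖ ^ 2 ≤ ‖w‖ * ‖f‖ := by
    have h1 : ‖x‖ ^ 2 = ⟪w, f⟫ := by
      have h5 : (⟪x, e⟫ : ℝ) + ⟪x, f⟫ = ⟪x, x⟫ := by
        simpa [inner_add_right] using congrArg (fun y => (⟪x, y⟫ : ℝ)) hef
      rw [← real_inner_self_eq_norm_sq, ← h5, hxperpE e he, zero_add, hinner_w f hf]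
    rw [h1]
    exact (real_inner_le_norm w f)
  -- sin α * ‖f‖ ≤ ‖x‖
  have hfx : Real.sin α * ‖f‖ ≤ ‖x‖ := by
    have := hkey e he f hf
    rwa [hef] at this
  -- sin α * ‖x‖ ≤ ‖w‖
  have hsinx : Real.sin α * ‖x‖ ≤ ‖w‖ := by
    rcases eq_or_lt_of_le hsin with h | hspos
    · rw [← h, zero_mul]; exact norm_nonneg w
    have hxpos : 0 < ‖x‖ := norm_pos_iff.mpr hx0
    nlinarith [mul_le_mul_of_nonneg_left hxsq hspos.le,
      mul_le_mul_of_nonneg_left hfx (norm_nonneg w)]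
  -- ‖v‖ ≤ C * ‖x‖ and C > 0
  have hvx : ‖v‖ ≤ C * ‖x‖ := by
    have h1 : ‖v‖ ≤ ‖(J.symm : V →L[ℝ] V)‖ * ‖x‖ := by
      have := (J.symm : V →L[ℝ] V).le_opNorm x
      simpa [hx] using this
    have h2 : ‖(J.symm : V →L[ℝ] V)‖ ≤ C := le_trans (le_max_right _ _) hC
    exact h1.trans (mul_le_mul_of_nonneg_right h2 (norm_nonneg x))
  have hC0 : 0 < C := by
    have hvpos : 0 < ‖v‖ := norm_pos_iff.mpr hv
    nlinarith [norm_nonneg x]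
  -- final computation
  refine ⟨w, hwF, hw0, ?_⟩
  have hωw : ω v w = ‖w‖ ^ 2 := by
    rw [hJ, ← hx, hinner_w w hwF, real_inner_self_eq_norm_sq]
  rw [hωw, abs_of_nonneg (by positivity)]
  have h1 : C⁻¹ * ‖v‖ ≤ ‖x‖ := by
    rw [inv_mul_le_iff₀ hC0]
    exact hvx
  nlinarith [mul_le_mul_of_nonneg_right (mul_le_mul_of_nonneg_left h1 hsin) (norm_nonneg w),
    mul_le_mul_of_nonneg_right hsinx (norm_nonneg w)]
end

section
/- Let f : M → M be a bijection, Γ ⊂ M a nonempty f-invariant set, and A : M → GL(d,ℝ) a map with K := sup_{x∈Γ} max(‖A(x)‖, ‖A(x)⁻¹‖) < ∞. If (ℝ^d = E¹_x ⊕ E²_x)_{x∈Γ} is an m-dominated splitting of index p over Γ for some m ≥ 1 and 1 ≤ p ≤ d−1, then the angles ∠(E¹_x, E²_x) are bounded away from zero: inf_{x∈Γ} ∠(E¹_x, E²_x) > 0. -/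
open InnerProductGeometry

/-- The cocycle `A^n(x) = A(f^{n-1}x) ⋯ A(fx) A(x)` over the map `f`
generated by `A : M → GL(d,ℝ)`. -/
noncomputable def cocycle {M : Type*} {d : ℕ} (f : M → M)
    (A : M → (EuclideanSpace ℝ (Fin d) ≃L[ℝ] EuclideanSpace ℝ (Fin d))) :
    ℕ → M → (EuclideanSpace ℝ (Fin d) ≃L[ℝ] EuclideanSpace ℝ (Fin d))
  | 0, _ => ContinuousLinearEquiv.refl ℝ _
  | n + 1, x => (cocycle f A n x).trans (A (f^[n] x))

/-- An `m`-dominated splitting of index `p` for the cocycle generated by `A` over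
`f`, on the invariant set `Γ`: a family of invariant direct-sum decompositions
`ℝ^d = E¹ₓ ⊕ E²ₓ`, with `dim E¹ₓ = p`, such that
`‖A^m(x)|_{E²ₓ}‖ ⬝ ‖(A^m(x)|_{E¹ₓ})⁻¹‖ ≤ 1/2` for every `x ∈ Γ` (the inequality
being expressed pointwise on unit-ball vectors, which is equivalent). -/
def IsDominatedSplitting {M : Type*} {d : ℕ} (f : M → M)
    (A : M → (EuclideanSpace ℝ (Fin d) ≃L[ℝ] EuclideanSpace ℝ (Fin d)))
    (Γ : Set M) (p m : ℕ)
    (E1 E2 : M → Submodule ℝ (EuclideanSpace ℝ (Fin d))) : Prop :=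
  (∀ x ∈ Γ, IsCompl (E1 x) (E2 x)) ∧
  (∀ x ∈ Γ, Module.finrank ℝ (E1 x) = p) ∧
  (∀ x ∈ Γ, (E1 x).map ((A x : EuclideanSpace ℝ (Fin d) →L[ℝ] EuclideanSpace ℝ (Fin d)) :
      EuclideanSpace ℝ (Fin d) →ₗ[ℝ] EuclideanSpace ℝ (Fin d)) = E1 (f x)) ∧
  (∀ x ∈ Γ, (E2 x).map ((A x : EuclideanSpace ℝ (Fin d) →L[ℝ] EuclideanSpace ℝ (Fin d)) :
      EuclideanSpace ℝ (Fin d) →ₗ[ℝ] EuclideanSpace ℝ (Fin d)) = E2 (f x)) ∧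
  (∀ x ∈ Γ, ∀ v ∈ E2 x, ∀ w ∈ E1 (f^[m] x), ‖v‖ ≤ 1 → ‖w‖ ≤ 1 →
    ‖cocycle f A m x v‖ * ‖(cocycle f A m x).symm w‖ ≤ 1 / 2)

section Aux

variable {M : Type*} {d : ℕ} {f : M → M}
  {A : M → (EuclideanSpace ℝ (Fin d) ≃L[ℝ] EuclideanSpace ℝ (Fin d))}
  {Γ : Set M} {K : ℝ}

lemma cocycle_succ_apply (n : ℕ) (x : M) (v : EuclideanSpace ℝ (Fin d)) :
    cocycle f A (n + 1) x v = A (f^[n] x) (cocycle f A n x v) := rfl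

lemma cocycle_succ_symm_apply (n : ℕ) (x : M) (v : EuclideanSpace ℝ (Fin d)) :
    (cocycle f A (n + 1) x).symm v = (cocycle f A n x).symm ((A (f^[n] x)).symm v) := rfl

lemma iterate_mem (hΓ : ∀ x ∈ Γ, f x ∈ Γ) (n : ℕ) {x : M} (hx : x ∈ Γ) : f^[n] x ∈ Γ := by
  induction n with
  | zero => simpa using hx
  | succ n ih => rw [Function.iterate_succ_apply']; exact hΓ _ ih

lemma cocycle_norm_le (hΓ : ∀ x ∈ Γ, f x ∈ Γ) (hK0 : 0 ≤ K)
    (hK : ∀ x ∈ Γ, ∀ v : EuclideanSpace ℝ (Fin d), ‖A x v‖ ≤ K * ‖v‖)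
    (n : ℕ) {x : M} (hx : x ∈ Γ) (v : EuclideanSpace ℝ (Fin d)) :
    ‖cocycle f A n x v‖ ≤ K ^ n * ‖v‖ := by
  induction n with
  | zero => simp [cocycle]
  | succ n ih =>
    rw [cocycle_succ_apply]
    calc ‖A (f^[n] x) (cocycle f A n x v)‖ ≤ K * ‖cocycle f A n x v‖ :=
          hK _ (iterate_mem hΓ n hx) _
      _ ≤ K * (K ^ n * ‖v‖) := by
          exact mul_le_mul_of_nonneg_left ih hK0
      _ = K ^ (n + 1) * ‖v‖ := by ring

lemma cocycle_symm_norm_le (hΓ : ∀ x ∈ Γ, f x ∈ Γ) (hK0 : 0 ≤ K)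
    (hK : ∀ x ∈ Γ, ∀ v : EuclideanSpace ℝ (Fin d), ‖(A x).symm v‖ ≤ K * ‖v‖)
    (n : ℕ) {x : M} (hx : x ∈ Γ) (v : EuclideanSpace ℝ (Fin d)) :
    ‖(cocycle f A n x).symm v‖ ≤ K ^ n * ‖v‖ := by
  induction n generalizing v with
  | zero => simp [cocycle]
  | succ n ih =>
    rw [cocycle_succ_symm_apply]
    calc ‖(cocycle f A n x).symm ((A (f^[n] x)).symm v)‖ ≤ K ^ n * ‖(A (f^[n] x)).symm v‖ :=
          ih _
      _ ≤ K ^ n * (K * ‖v‖) :=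
          mul_le_mul_of_nonneg_left (hK _ (iterate_mem hΓ n hx) _) (pow_nonneg hK0 n)
      _ = K ^ (n + 1) * ‖v‖ := by ring

lemma cocycle_mem_E1 {E1 : M → Submodule ℝ (EuclideanSpace ℝ (Fin d))}
    (hΓ : ∀ x ∈ Γ, f x ∈ Γ)
    (hinv : ∀ x ∈ Γ, (E1 x).map ((A x : EuclideanSpace ℝ (Fin d) →L[ℝ] EuclideanSpace ℝ (Fin d)) :
      EuclideanSpace ℝ (Fin d) →ₗ[ℝ] EuclideanSpace ℝ (Fin d)) = E1 (f x))
    (n : ℕ) {x : M} (hx : x ∈ Γ) {u : EuclideanSpace ℝ (Fin d)} (hu : u ∈ E1 x) :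
    cocycle f A n x u ∈ E1 (f^[n] x) := by
  induction n with
  | zero => simpa [cocycle] using hu
  | succ n ih =>
    rw [cocycle_succ_apply, Function.iterate_succ_apply']
    rw [← hinv _ (iterate_mem hΓ n hx)]
    exact Submodule.mem_map_of_mem ih

end Aux

theorem stmt8 {M : Type*} {d : ℕ} (f : M → M) (hf : Function.Bijective f)
    (Γ : Set M) (hΓne : Γ.Nonempty) (hΓinv : f '' Γ = Γ)
    (A : M → (EuclideanSpace ℝ (Fin d) ≃L[ℝ] EuclideanSpace ℝ (Fin d)))
    (K : ℝ)
    (hK : ∀ x ∈ Γ, ‖(A x : EuclideanSpace ℝ (Fin d) →L[ℝ] EuclideanSpace ℝ (Fin d))‖ ≤ K ∧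
      ‖((A x).symm : EuclideanSpace ℝ (Fin d) →L[ℝ] EuclideanSpace ℝ (Fin d))‖ ≤ K)
    (m p : ℕ) (hm : 1 ≤ m) (hp : 1 ≤ p) (hpd : p ≤ d - 1)
    (E1 E2 : M → Submodule ℝ (EuclideanSpace ℝ (Fin d)))
    (hdom : IsDominatedSplitting f A Γ p m E1 E2) :
    0 < sInf {θ : ℝ | ∃ x ∈ Γ, θ = angleSS (E1 x) (E2 x)} := by
  obtain ⟨hcompl, hrank, hinv1, hinv2, hdm⟩ := hdom
  -- basic facts
  have hΓ : ∀ x ∈ Γ, f x ∈ Γ := fun x hx => by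
    rw [← hΓinv]; exact Set.mem_image_of_mem f hx
  -- d ≥ 2 : not directly needed, but d ≥ p + 1 > p needed for E2 ≠ ⊥
  have hd2 : 2 ≤ d := by omega
  -- pointwise norm bounds
  have hKpt : ∀ x ∈ Γ, ∀ v : EuclideanSpace ℝ (Fin d), ‖A x v‖ ≤ K * ‖v‖ := by
    intro x hx v
    calc ‖A x v‖ = ‖(A x : EuclideanSpace ℝ (Fin d) →L[ℝ] EuclideanSpace ℝ (Fin d)) v‖ := rfl
      _ ≤ ‖(A x : EuclideanSpace ℝ (Fin d) →L[ℝ] EuclideanSpace ℝ (Fin d))‖ * ‖v‖ :=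
          ContinuousLinearMap.le_opNorm _ _
      _ ≤ K * ‖v‖ := mul_le_mul_of_nonneg_right (hK x hx).1 (norm_nonneg v)
  have hKpt' : ∀ x ∈ Γ, ∀ v : EuclideanSpace ℝ (Fin d), ‖(A x).symm v‖ ≤ K * ‖v‖ := by
    intro x hx v
    calc ‖(A x).symm v‖
        = ‖((A x).symm : EuclideanSpace ℝ (Fin d) →L[ℝ] EuclideanSpace ℝ (Fin d)) v‖ := rfl
      _ ≤ ‖((A x).symm : EuclideanSpace ℝ (Fin d) →L[ℝ] EuclideanSpace ℝ (Fin d))‖ * ‖v‖ :=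
          ContinuousLinearMap.le_opNorm _ _
      _ ≤ K * ‖v‖ := mul_le_mul_of_nonneg_right (hK x hx).2 (norm_nonneg v)
  -- K ≥ 1
  have hK1 : 1 ≤ K := by
    obtain ⟨x0, hx0⟩ := hΓne
    have hne : (EuclideanSpace.single (⟨0, by omega⟩ : Fin d) (1:ℝ)) ≠ 0 := by
      intro h
      have := congrArg (fun w : EuclideanSpace ℝ (Fin d) => w ⟨0, by omega⟩) h
      simp [EuclideanSpace.single_apply] at this
    set u0 := EuclideanSpace.single (⟨0, by omega⟩ : Fin d) (1:ℝ)
    have h1 : ‖u0‖ = 1 := by simp [u0, EuclideanSpace.norm_single]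
    have h2 : ‖u0‖ ≤ K * ‖A x0 u0‖ := by
      have := hKpt' x0 hx0 (A x0 u0)
      simpa using this
    have h3 : ‖A x0 u0‖ ≤ K * ‖u0‖ := hKpt x0 hx0 u0
    nlinarith [norm_nonneg (A x0 u0)]
  have hK0 : (0:ℝ) ≤ K := le_trans zero_le_one hK1
  have hKm : (0:ℝ) < K ^ m := pow_pos (lt_of_lt_of_le zero_lt_one hK1) m
  -- the main constant
  set c : ℝ := 1 / (2 * (K ^ m * K ^ m)) with hc
  have hcpos : 0 < c := by positivity
  -- Step 1: for unit vectors u ∈ E1 x, v ∈ E2 x, ‖u - v‖ ≥ c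
  have key : ∀ x ∈ Γ, ∀ u ∈ E1 x, ∀ v ∈ E2 x, ‖u‖ = 1 → ‖v‖ = 1 → c ≤ ‖u - v‖ := by
    intro x hx u hu v hv hnu hnv
    set B := cocycle f A m x with hB
    have hBu_mem : B u ∈ E1 (f^[m] x) := cocycle_mem_E1 hΓ hinv1 m hx hu
    have hBu_ne : B u ≠ 0 := by
      intro h
      have : u = 0 := by
        have := congrArg (B.symm) h
        simpa using this
      rw [this] at hnu; simp at hnu
    have hBu_pos : 0 < ‖B u‖ := norm_pos_iff.mpr hBu_ne
    set w : EuclideanSpace ℝ (Fin d) := ‖B u‖⁻¹ • (B u) with hw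
    have hw_mem : w ∈ E1 (f^[m] x) := Submodule.smul_mem _ _ hBu_mem
    have hw_norm : ‖w‖ = 1 := by
      rw [hw, norm_smul, norm_inv, norm_norm, inv_mul_cancel₀ (ne_of_gt hBu_pos)]
    have hdm' := hdm x hx v hv w hw_mem (le_of_eq hnv) (le_of_eq hw_norm)
    have hsymm_w : B.symm w = ‖B u‖⁻¹ • u := by
      rw [hw, map_smul]; simp
    have hsymm_norm : ‖B.symm w‖ = ‖B u‖⁻¹ := by
      rw [hsymm_w, norm_smul, norm_inv, norm_norm, hnu, mul_one]
    rw [hsymm_norm] at hdm'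
    -- ‖B v‖ ≤ ‖B u‖ / 2
    have hBv : ‖B v‖ ≤ ‖B u‖ / 2 := by
      rw [← hB] at hdm'
      have h := mul_le_mul_of_nonneg_right hdm' (le_of_lt hBu_pos)
      rw [mul_assoc, inv_mul_cancel₀ (ne_of_gt hBu_pos), mul_one] at h
      linarith
    -- ‖B u‖ ≥ 1 / K^m
    have hBu_lb : 1 / K ^ m ≤ ‖B u‖ := by
      have h := cocycle_symm_norm_le hΓ hK0 hKpt' m hx (B u)
      have hBsu : B.symm (B u) = u := by simp
      rw [hBsu, hnu] at h
      rw [div_le_iff₀ hKm]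
      linarith [h]
    -- ‖B u - B v‖ ≤ K^m ‖u - v‖
    have hdiff : ‖B u - B v‖ ≤ K ^ m * ‖u - v‖ := by
      have := cocycle_norm_le hΓ hK0 hKpt m hx (u - v)
      rwa [map_sub] at this
    have htri : ‖B u‖ ≤ ‖B u - B v‖ + ‖B v‖ := by
      have := norm_add_le (B u - B v) (B v)
      simpa using this
    have h4 : ‖B u‖ / 2 ≤ K ^ m * ‖u - v‖ := by linarith
    rw [hc]
    rw [div_le_iff₀ (by positivity)] at h4 ⊢
    rw [div_le_iff₀ hKm] at hBu_lb
    nlinarith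
  -- Step 2: for nonzero u ∈ E1 x, v ∈ E2 x, angle u v ≥ c
  have key2 : ∀ x ∈ Γ, ∀ u ∈ E1 x, ∀ v ∈ E2 x, u ≠ 0 → v ≠ 0 → c ≤ angle u v := by
    intro x hx u hu v hv hu0 hv0
    have hnu : (0:ℝ) < ‖u‖ := norm_pos_iff.mpr hu0
    have hnv : (0:ℝ) < ‖v‖ := norm_pos_iff.mpr hv0
    set u' := ‖u‖⁻¹ • u with hu'
    set v' := ‖v‖⁻¹ • v with hv'
    have hu'_mem : u' ∈ E1 x := Submodule.smul_mem _ _ hu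
    have hv'_mem : v' ∈ E2 x := Submodule.smul_mem _ _ hv
    have hu'_norm : ‖u'‖ = 1 := by
      rw [hu', norm_smul, norm_inv, norm_norm, inv_mul_cancel₀ (ne_of_gt hnu)]
    have hv'_norm : ‖v'‖ = 1 := by
      rw [hv', norm_smul, norm_inv, norm_norm, inv_mul_cancel₀ (ne_of_gt hnv)]
    have hang : angle u' v' = angle u v := by
      rw [hu', hv', angle_smul_left_of_pos _ _ (by positivity),
        angle_smul_right_of_pos _ _ (by positivity)]
    have hkey := key x hx u' hu'_mem v' hv'_mem hu'_norm hv'_norm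
    -- ‖u' - v'‖ ≤ angle u' v'
    have hcos : Real.cos (angle u' v') = inner ℝ u' v' := by
      rw [cos_angle, hu'_norm, hv'_norm]; norm_num
    have hsq : ‖u' - v'‖ ^ 2 = 2 - 2 * Real.cos (angle u' v') := by
      rw [norm_sub_sq_real, hu'_norm, hv'_norm, hcos]; ring
    have hθnn : 0 ≤ angle u' v' := angle_nonneg _ _
    have h5 : ‖u' - v'‖ ^ 2 ≤ (angle u' v') ^ 2 := by
      rw [hsq]
      have := Real.one_sub_sq_div_two_le_cos (x := angle u' v')
      linarith
    have h6 : ‖u' - v'‖ ≤ angle u' v' := by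
      nlinarith [norm_nonneg (u' - v')]
    rw [← hang]
    exact le_trans hkey h6
  -- Step 3: each angleSS is ≥ c
  have key3 : ∀ x ∈ Γ, c ≤ angleSS (E1 x) (E2 x) := by
    intro x hx
    apply le_csInf
    · -- nonempty: E1 x and E2 x are nontrivial
      have hE1ne : E1 x ≠ ⊥ := by
        intro h
        have := hrank x hx
        rw [h] at this
        simp at this
        omega
      have hE2ne : E2 x ≠ ⊥ := by
        intro h
        have hcompl' := hcompl x hx
        rw [h] at hcompl'
        have : E1 x = ⊤ := codisjoint_bot.mp hcompl'.codisjoint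
        have hr := hrank x hx
        rw [this] at hr
        simp [finrank_euclideanSpace] at hr
        omega
      obtain ⟨u, hu, hu0⟩ := Submodule.exists_mem_ne_zero_of_ne_bot hE1ne
      obtain ⟨v, hv, hv0⟩ := Submodule.exists_mem_ne_zero_of_ne_bot hE2ne
      exact ⟨angle u v, u, hu, v, hv, hu0, hv0, rfl⟩
    · rintro θ ⟨u, hu, v, hv, hu0, hv0, rfl⟩
      exact key2 x hx u hu v hv hu0 hv0
  -- Step 4: conclude
  have : c ≤ sInf {θ : ℝ | ∃ x ∈ Γ, θ = angleSS (E1 x) (E2 x)} := by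
    apply le_csInf
    · obtain ⟨x0, hx0⟩ := hΓne
      exact ⟨angleSS (E1 x0) (E2 x0), x0, hx0, rfl⟩
    · rintro θ ⟨x, hx, rfl⟩
      exact key3 x hx
  linarith
end

section
/- Let f : M → M be a bijection, Γ ⊂ M an f-invariant set, and A : M → GL(d,ℝ) a map with sup_{x∈Γ} max(‖A(x)‖, ‖A(x)⁻¹‖) < ∞. Fix 1 ≤ p ≤ d−1. If (ℝ^d = E¹_x ⊕ E²_x)_{x∈Γ} is an m-dominated splitting of index p over Γ and (ℝ^d = Ê¹_x ⊕ Ê²_x)_{x∈Γ} is an m̂-dominated splitting of index p over Γ (m, m̂ ≥ 1), then the two splittings coincide: E¹_x = Ê¹_x and E²_x = Ê²_x for every x ∈ Γ. -/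
namespace DomSplitAux

open Module

variable {M : Type*} {d : ℕ} (f : M → M)
  (A : M → (EuclideanSpace ℝ (Fin d) ≃L[ℝ] EuclideanSpace ℝ (Fin d)))

theorem cocycle_succ (n : ℕ) (x : M) :
    cocycle f A (n + 1) x = (cocycle f A n x).trans (A (f^[n] x)) := rfl

theorem cocycle_add (n k : ℕ) (x : M) :
    cocycle f A (n + k) x = (cocycle f A n x).trans (cocycle f A k (f^[n] x)) := by
  induction k with
  | zero => ext v; simp [cocycle]
  | succ k ih =>
    show cocycle f A ((n + k) + 1) x = _
    rw [cocycle_succ, ih]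
    refine ContinuousLinearEquiv.ext (funext fun v => ?_)
    simp [cocycle_succ, ContinuousLinearEquiv.trans_apply]
    congr 2
    rw [add_comm n k, Function.iterate_add_apply]

theorem cocycle_succ' (n : ℕ) (x : M) :
    cocycle f A (n + 1) x = (A x).trans (cocycle f A n (f x)) := by
  have h := cocycle_add f A 1 n x
  rw [add_comm 1 n] at h
  rw [h]
  ext v
  simp [cocycle, ContinuousLinearEquiv.trans_apply]

theorem iterate_mem {Γ : Set M} (hfΓ : ∀ x ∈ Γ, f x ∈ Γ) (n : ℕ) :
    ∀ x ∈ Γ, f^[n] x ∈ Γ := by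
  induction n with
  | zero => intro x hx; simpa using hx
  | succ n ih =>
    intro x hx
    rw [Function.iterate_succ_apply']
    exact hfΓ _ (ih x hx)

theorem mem_cocycle {Γ : Set M} (hfΓ : ∀ x ∈ Γ, f x ∈ Γ)
    (E : M → Submodule ℝ (EuclideanSpace ℝ (Fin d)))
    (hE : ∀ x ∈ Γ, (E x).map ((A x : EuclideanSpace ℝ (Fin d) →L[ℝ] EuclideanSpace ℝ (Fin d)) :
      EuclideanSpace ℝ (Fin d) →ₗ[ℝ] EuclideanSpace ℝ (Fin d)) = E (f x)) (n : ℕ) :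
    ∀ x ∈ Γ, ∀ v ∈ E x, cocycle f A n x v ∈ E (f^[n] x) := by
  induction n with
  | zero => intro x hx v hv; simpa [cocycle] using hv
  | succ n ih =>
    intro x hx v hv
    rw [cocycle_succ, Function.iterate_succ_apply']
    have h2 := hE (f^[n] x) (iterate_mem f hfΓ n x hx)
    rw [← h2]
    simp only [ContinuousLinearEquiv.trans_apply]
    exact Submodule.mem_map.mpr ⟨_, ih x hx v hv, rfl⟩

/-- one `m`-block of domination, scaled form. -/
theorem step {Γ : Set M} {p m : ℕ}
    {E1 E2 : M → Submodule ℝ (EuclideanSpace ℝ (Fin d))}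
    (hfΓ : ∀ x ∈ Γ, f x ∈ Γ)
    (hdom : IsDominatedSplitting f A Γ p m E1 E2) {x : M} (hx : x ∈ Γ)
    {v u : EuclideanSpace ℝ (Fin d)} (hv : v ∈ E2 x) (hu : u ∈ E1 x) :
    ‖cocycle f A m x v‖ * ‖u‖ ≤ 1 / 2 * (‖cocycle f A m x u‖ * ‖v‖) := by
  rcases eq_or_ne v 0 with rfl | hv0
  · simp
  rcases eq_or_ne u 0 with rfl | hu0
  · simp
  set C := cocycle f A m x with hC
  have hCu : C u ∈ E1 (f^[m] x) := mem_cocycle f A hfΓ E1 hdom.2.2.1 m x hx u hu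
  have hvpos : (0:ℝ) < ‖v‖ := norm_pos_iff.mpr hv0
  have hCupos : (0:ℝ) < ‖C u‖ :=
    norm_pos_iff.mpr (by simp [hC, ContinuousLinearEquiv.map_eq_zero_iff, hu0])
  have hv' : ‖v‖⁻¹ • v ∈ E2 x := Submodule.smul_mem _ _ hv
  have hw' : ‖C u‖⁻¹ • (C u) ∈ E1 (f^[m] x) := Submodule.smul_mem _ _ hCu
  have hnv : ‖‖v‖⁻¹ • v‖ = 1 := by
    rw [norm_smul, norm_inv, norm_norm]
    field_simp
  have hnw : ‖‖C u‖⁻¹ • C u‖ = 1 := by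
    rw [norm_smul, norm_inv, norm_norm]
    field_simp
  have key := hdom.2.2.2.2 x hx _ hv' _ hw' hnv.le hnw.le
  rw [← hC] at key
  simp only [map_smul, ContinuousLinearEquiv.symm_apply_apply, norm_smul, norm_inv,
    norm_norm] at key
  have hcal : ‖v‖⁻¹ * ‖C v‖ * (‖C u‖⁻¹ * ‖u‖) = (‖C v‖ * ‖u‖) / (‖v‖ * ‖C u‖) := by
    field_simp
  rw [hcal, div_le_iff₀ (by positivity)] at key
  nlinarith [key]

/-- iterated domination bound. -/
theorem growth {Γ : Set M} {p m : ℕ}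
    {E1 E2 : M → Submodule ℝ (EuclideanSpace ℝ (Fin d))}
    (hfΓ : ∀ x ∈ Γ, f x ∈ Γ)
    (hdom : IsDominatedSplitting f A Γ p m E1 E2) (k : ℕ) :
    ∀ x ∈ Γ, ∀ v ∈ E2 x, ∀ u ∈ E1 x,
      ‖cocycle f A (k * m) x v‖ * ‖u‖ ≤
        (1/2 : ℝ) ^ k * (‖cocycle f A (k * m) x u‖ * ‖v‖) := by
  induction k with
  | zero =>
    intro x hx v hv u hu
    simp [cocycle, mul_comm]
  | succ k ih =>
    intro x hx v hv u hu
    have hidx : (k + 1) * m = k * m + m := by ring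
    rw [hidx, cocycle_add]
    set y := f^[k * m] x with hy'
    have hy : y ∈ Γ := iterate_mem f hfΓ (k * m) x hx
    set C1 := cocycle f A (k * m) x with hC1
    have hv' : C1 v ∈ E2 y := mem_cocycle f A hfΓ E2 hdom.2.2.2.1 (k * m) x hx v hv
    have hu' : C1 u ∈ E1 y := mem_cocycle f A hfΓ E1 hdom.2.2.1 (k * m) x hx u hu
    have h2 := step f A hfΓ hdom hy hv' hu'
    have ihh := ih x hx v hv u hu
    simp only [ContinuousLinearEquiv.trans_apply]
    rcases eq_or_ne u 0 with rfl | hu0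
    · simp
    have hC1u : (0:ℝ) < ‖C1 u‖ :=
      norm_pos_iff.mpr (by simp [hC1, ContinuousLinearEquiv.map_eq_zero_iff, hu0])
    have H := mul_le_mul_of_nonneg_right h2 (norm_nonneg u)
    have H2 := mul_le_mul_of_nonneg_left ihh
      (by positivity : (0:ℝ) ≤ 1 / 2 * ‖cocycle f A m y (C1 u)‖)
    have key : (‖cocycle f A m y (C1 v)‖ * ‖u‖) * ‖C1 u‖ ≤
        ((1/2 : ℝ) ^ (k + 1) * (‖cocycle f A m y (C1 u)‖ * ‖v‖)) * ‖C1 u‖ := by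
      ring_nf
      ring_nf at H H2 ihh
      nlinarith [H, H2]
    exact le_of_mul_le_mul_right key hC1u

/-- growth bound at times `j * (m * r)`, with bound `(1/2)^j`. -/
theorem growthN {Γ : Set M} {p m : ℕ}
    {E1 E2 : M → Submodule ℝ (EuclideanSpace ℝ (Fin d))}
    (hfΓ : ∀ x ∈ Γ, f x ∈ Γ)
    (hdom : IsDominatedSplitting f A Γ p m E1 E2)
    (r : ℕ) (hr : 1 ≤ r) (j n : ℕ) (hn : n = j * (m * r)) :
    ∀ x ∈ Γ, ∀ v ∈ E2 x, ∀ u ∈ E1 x,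
      ‖cocycle f A n x v‖ * ‖u‖ ≤ (1/2 : ℝ) ^ j * (‖cocycle f A n x u‖ * ‖v‖) := by
  intro x hx v hv u hu
  have h := growth f A hfΓ hdom (j * r) x hx v hv u hu
  have e : j * r * m = n := by rw [hn]; ring
  rw [e] at h
  refine h.trans (mul_le_mul_of_nonneg_right ?_ (by positivity))
  exact pow_le_pow_of_le_one (by norm_num) (by norm_num)
    (Nat.le_mul_of_pos_right j (by omega))


set_option maxHeartbeats 800000 in
theorem corner {Γ : Set M} {p m m' : ℕ}
    {E1 E2 F1 F2 : M → Submodule ℝ (EuclideanSpace ℝ (Fin d))}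
    (hfΓ : ∀ x ∈ Γ, f x ∈ Γ) (hpd : p ≤ d) (hm : 1 ≤ m) (hm' : 1 ≤ m')
    (hdomE : IsDominatedSplitting f A Γ p m E1 E2)
    (hdomF : IsDominatedSplitting f A Γ p m' F1 F2) :
    ∀ x ∈ Γ, ∀ z ∈ E1 x, z ∈ F2 x → z = 0 := by
  intro x hx z hzE hzF
  by_contra hz0
  have GE : ∀ (j : ℕ) (a : EuclideanSpace ℝ (Fin d)), a ∈ E2 x → ∀ b ∈ E1 x,
      ‖cocycle f A (j*(m*m')) x a‖ * ‖b‖ ≤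
        (1/2:ℝ)^j * (‖cocycle f A (j*(m*m')) x b‖ * ‖a‖) :=
    fun j a ha b hb => growthN f A hfΓ hdomE m' hm' j _ rfl x hx a ha b hb
  have GF : ∀ (j : ℕ) (a : EuclideanSpace ℝ (Fin d)), a ∈ F2 x → ∀ b ∈ F1 x,
      ‖cocycle f A (j*(m*m')) x a‖ * ‖b‖ ≤
        (1/2:ℝ)^j * (‖cocycle f A (j*(m*m')) x b‖ * ‖a‖) :=
    fun j a ha b hb => growthN f A hfΓ hdomF m hm j _ (by ring) x hx a ha b hb
  have hzn : (0:ℝ) < ‖z‖ := norm_pos_iff.mpr hz0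
  have hinter : ∀ z' : EuclideanSpace ℝ (Fin d), z' ∈ F1 x → z' ∈ E2 x → z' = 0 := by
    intro z' h1 h2
    by_contra hz'0
    have hE := GE 1 z' h2 z hzE
    have hF := GF 1 z hzF z' h1
    have p1 : (0:ℝ) < ‖cocycle f A (1*(m*m')) x z‖ :=
      norm_pos_iff.mpr (by simp [ContinuousLinearEquiv.map_eq_zero_iff, hz0])
    have p2 : (0:ℝ) < ‖z'‖ := norm_pos_iff.mpr hz'0
    simp only [pow_one] at hE hF
    nlinarith [hE, hF, mul_pos p1 p2]
  have hr2 : Module.finrank ℝ (E1 x) + Module.finrank ℝ (E2 x) = d := by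
    rw [Submodule.finrank_add_eq_of_isCompl (hdomE.1 x hx), finrank_euclideanSpace_fin]
  have hsup : F1 x ⊔ E2 x = ⊤ := by
    apply Submodule.eq_top_of_disjoint
    · rw [finrank_euclideanSpace_fin, hdomF.2.1 x hx]
      have := hdomE.2.1 x hx
      omega
    · rw [disjoint_iff, eq_bot_iff]
      intro y hy
      rw [Submodule.mem_inf] at hy
      exact (Submodule.mem_bot ℝ).mpr (hinter y hy.1 hy.2)
  obtain ⟨a, ha, b, hb, hab⟩ :=
    Submodule.mem_sup.mp (hsup ▸ Submodule.mem_top : z ∈ F1 x ⊔ E2 x)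
  have ha0 : a ≠ 0 := by
    rintro rfl
    rw [zero_add] at hab
    exact hz0 (Submodule.disjoint_def.mp (hdomE.1 x hx).disjoint z hzE (hab ▸ hb))
  have han : (0:ℝ) < ‖a‖ := norm_pos_iff.mpr ha0
  obtain ⟨j, hj⟩ := exists_pow_lt_of_lt_one
    (show (0:ℝ) < ‖a‖ / (‖z‖ + ‖b‖ + 1) by positivity) (by norm_num : (1/2:ℝ) < 1)
  rw [lt_div_iff₀ (by positivity)] at hj
  set t : ℝ := (1/2:ℝ)^j with htdef
  have ht0 : (0:ℝ) ≤ t := by positivity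
  set n := j*(m*m') with hndef
  have h1 := GF j z hzF a ha
  have h2 := GE j b hb z hzE
  rw [← htdef] at h1 h2
  have htri : ‖cocycle f A n x a‖ ≤ ‖cocycle f A n x z‖ + ‖cocycle f A n x b‖ := by
    have hza : a = z - b := by rw [← hab]; abel
    rw [hza, map_sub]
    exact norm_sub_le _ _
  have pa : (0:ℝ) < ‖cocycle f A n x a‖ :=
    norm_pos_iff.mpr (by simp [ContinuousLinearEquiv.map_eq_zero_iff, ha0])
  have ht2 : t * t ≤ t := by
    nlinarith [ht0, pow_le_one₀ (by norm_num : (0:ℝ) ≤ 1/2) (by norm_num : (1/2:ℝ) ≤ 1) (n := j)]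
  set Zn := ‖cocycle f A n x z‖ with hZn
  set Bn := ‖cocycle f A n x b‖ with hBn
  set An := ‖cocycle f A n x a‖ with hAn
  set za := ‖a‖ with hza'
  set zz := ‖z‖ with hzz'
  set zb := ‖b‖ with hzb'
  clear_value Zn Bn An za zz zb t
  have H1 := mul_le_mul_of_nonneg_right htri (mul_nonneg han.le hzn.le)
  have H2 := mul_le_mul_of_nonneg_right h1 hzn.le
  have H3 := mul_le_mul_of_nonneg_right h2 han.le
  have H4 := mul_le_mul_of_nonneg_left h1 (mul_nonneg ht0 (show (0:ℝ) ≤ zb by rw [hzb']; exact norm_nonneg b))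
  have H5 := mul_lt_mul_of_pos_right hj (mul_pos pa hzn)
  have H6 := mul_le_mul_of_nonneg_right ht2
    (mul_nonneg (show (0:ℝ) ≤ zb by rw [hzb']; exact norm_nonneg b) (mul_nonneg pa.le hzn.le))
  nlinarith [H1, H2, H3, H4, H5, H6, mul_pos (mul_pos pa hzn)
    (show (0:ℝ) < t by rw [htdef]; positivity),
    mul_nonneg ht0 (mul_nonneg pa.le hzn.le)]

set_option maxHeartbeats 800000 in
theorem subset {Γ : Set M} {p m m' : ℕ}
    {E1 E2 F1 F2 : M → Submodule ℝ (EuclideanSpace ℝ (Fin d))}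
    (hfΓ : ∀ x ∈ Γ, f x ∈ Γ) (hpd : p ≤ d) (hm : 1 ≤ m) (hm' : 1 ≤ m')
    (hdomE : IsDominatedSplitting f A Γ p m E1 E2)
    (hdomF : IsDominatedSplitting f A Γ p m' F1 F2) :
    ∀ x ∈ Γ, F2 x ≤ E2 x := by
  intro x hx v hvF
  obtain ⟨v1, hv1, v2, hv2, hvsum⟩ :=
    Submodule.mem_sup.mp (((hdomE.1 x hx).sup_eq_top) ▸ Submodule.mem_top (x := v))
  have hv1z : v1 = 0 := by
    by_contra hv10
    have hv1F : v1 ∉ F2 x := fun h =>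
      hv10 (corner f A hfΓ hpd hm hm' hdomE hdomF x hx v1 hv1 h)
    obtain ⟨u1, hu1, u2, hu2, husum⟩ :=
      Submodule.mem_sup.mp (((hdomF.1 x hx).sup_eq_top) ▸ Submodule.mem_top (x := v1))
    have hu10 : u1 ≠ 0 := by
      rintro rfl
      rw [zero_add] at husum
      exact hv1F (husum ▸ hu2)
    have GE : ∀ (j : ℕ) (a : EuclideanSpace ℝ (Fin d)), a ∈ E2 x → ∀ b ∈ E1 x,
        ‖cocycle f A (j*(m*m')) x a‖ * ‖b‖ ≤
          (1/2:ℝ)^j * (‖cocycle f A (j*(m*m')) x b‖ * ‖a‖) :=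
      fun j a ha b hb => growthN f A hfΓ hdomE m' hm' j _ rfl x hx a ha b hb
    have GF : ∀ (j : ℕ) (a : EuclideanSpace ℝ (Fin d)), a ∈ F2 x → ∀ b ∈ F1 x,
        ‖cocycle f A (j*(m*m')) x a‖ * ‖b‖ ≤
          (1/2:ℝ)^j * (‖cocycle f A (j*(m*m')) x b‖ * ‖a‖) :=
      fun j a ha b hb => growthN f A hfΓ hdomF m hm j _ (by ring) x hx a ha b hb
    have hnu1 : (0:ℝ) < ‖u1‖ := norm_pos_iff.mpr hu10
    have hnv1 : (0:ℝ) < ‖v1‖ := norm_pos_iff.mpr hv10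
    obtain ⟨j, hj⟩ := exists_pow_lt_of_lt_one
      (show (0:ℝ) < min (‖u1‖/(2*(‖u2‖+1)))
          ((‖u1‖*‖v1‖)/(2*‖v‖*‖v1‖ + ‖v2‖*‖u1‖ + 1))
        from lt_min (by positivity) (by positivity))
      (by norm_num : (1/2:ℝ) < 1)
    set t : ℝ := (1/2:ℝ)^j with htdef
    have ht0 : (0:ℝ) ≤ t := by positivity
    have hjj1 : t < ‖u1‖/(2*(‖u2‖+1)) := lt_of_lt_of_le hj (min_le_left _ _)
    have hjj2 : t < (‖u1‖*‖v1‖)/(2*‖v‖*‖v1‖ + ‖v2‖*‖u1‖ + 1) :=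
      lt_of_lt_of_le hj (min_le_right _ _)
    rw [lt_div_iff₀ (by positivity)] at hjj1 hjj2
    have S1 : t * ‖u2‖ < ‖u1‖ / 2 := by nlinarith [ht0]
    have S2 : t * (2*‖v‖*‖v1‖ + ‖v2‖*‖u1‖) < ‖u1‖*‖v1‖ := by nlinarith [ht0]
    set n := j*(m*m') with hndef
    have h1 := GE j v2 hv2 v1 hv1
    have h2 := GF j u2 hu2 u1 hu1
    have h3 := GF j v hvF u1 hu1
    rw [← htdef] at h1 h2 h3
    have h4 : ‖cocycle f A n x u1‖ ≤ ‖cocycle f A n x v1‖ + ‖cocycle f A n x u2‖ := by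
      have hd : u1 = v1 - u2 := by rw [← husum]; abel
      rw [hd, map_sub]
      exact norm_sub_le _ _
    have h5 : ‖cocycle f A n x v1‖ ≤ ‖cocycle f A n x v‖ + ‖cocycle f A n x v2‖ := by
      have hd : v1 = v - v2 := by rw [← hvsum]; abel
      rw [hd, map_sub]
      exact norm_sub_le _ _
    have pa1 : (0:ℝ) < ‖cocycle f A n x v1‖ :=
      norm_pos_iff.mpr (by simp [ContinuousLinearEquiv.map_eq_zero_iff, hv10])
    have pb1 : (0:ℝ) ≤ ‖cocycle f A n x u1‖ := norm_nonneg _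
    set a1 := ‖cocycle f A n x v1‖ with ha1'
    set b1 := ‖cocycle f A n x u1‖ with hb1'
    set c0 := ‖cocycle f A n x v‖ with hc0'
    set a2 := ‖cocycle f A n x v2‖ with ha2'
    set b2 := ‖cocycle f A n x u2‖ with hb2'
    set nv := ‖v‖ with hnv'
    set nv1 := ‖v1‖ with hnv1'
    set nv2 := ‖v2‖ with hnv2'
    set nu1 := ‖u1‖ with hnu1'
    set nu2 := ‖u2‖ with hnu2'
    clear_value a1 b1 c0 a2 b2 nv nv1 nv2 nu1 nu2 t
    have hb2 : b1 ≤ 2 * a1 := by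
      nlinarith [mul_le_mul_of_nonneg_right h4 hnu1.le, h2,
        mul_le_mul_of_nonneg_left S1.le pb1, hnu1]
    have hc1 := mul_le_mul_of_nonneg_right h5 (mul_nonneg hnu1.le hnv1.le)
    have hc2 := mul_le_mul_of_nonneg_right h3 hnv1.le
    have hc3 := mul_le_mul_of_nonneg_right h1 hnu1.le
    have hc4 := mul_le_mul_of_nonneg_left hb2
      (mul_nonneg (mul_nonneg ht0 (show (0:ℝ) ≤ nv by rw [hnv']; exact norm_nonneg v)) hnv1.le)
    have hc5 := mul_lt_mul_of_pos_left S2 pa1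
    nlinarith [hc1, hc2, hc3, hc4, hc5]
  rw [hv1z, zero_add] at hvsum
  exact hvsum ▸ hv2

theorem cocycle_inv (g : M → M) (hfg : ∀ x, f (g x) = x)
    (n : ℕ) (x : M) :
    cocycle g (fun y => (A (g y)).symm) n x = (cocycle f A n (g^[n] x)).symm := by
  induction n with
  | zero =>
    ext v
    simp [cocycle]
  | succ n ih =>
    rw [cocycle_succ, ih]
    have hy : f (g^[n+1] x) = g^[n] x := by
      rw [Function.iterate_succ_apply']
      exact hfg _
    rw [cocycle_succ' f A n (g^[n+1] x), hy]
    ext v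
    simp [ContinuousLinearEquiv.trans_apply, ContinuousLinearEquiv.symm_trans_apply,
      Function.iterate_succ_apply']

theorem inv_dom {Γ : Set M} {p m : ℕ}
    {E1 E2 : M → Submodule ℝ (EuclideanSpace ℝ (Fin d))}
    (g : M → M) (hfg : ∀ x, f (g x) = x)
    (hgΓ : ∀ x ∈ Γ, g x ∈ Γ)
    (hdom : IsDominatedSplitting f A Γ p m E1 E2) :
    IsDominatedSplitting g (fun y => (A (g y)).symm) Γ (d - p) m E2 E1 := by
  have hmap : ∀ (E : M → Submodule ℝ (EuclideanSpace ℝ (Fin d)))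
      (hE : ∀ x ∈ Γ, (E x).map ((A x : EuclideanSpace ℝ (Fin d) →L[ℝ] EuclideanSpace ℝ (Fin d)) :
        EuclideanSpace ℝ (Fin d) →ₗ[ℝ] EuclideanSpace ℝ (Fin d)) = E (f x)),
      ∀ x ∈ Γ, (E x).map ((((A (g x)).symm : EuclideanSpace ℝ (Fin d) ≃L[ℝ] EuclideanSpace ℝ (Fin d)) :
        EuclideanSpace ℝ (Fin d) →L[ℝ] EuclideanSpace ℝ (Fin d)) :
        EuclideanSpace ℝ (Fin d) →ₗ[ℝ] EuclideanSpace ℝ (Fin d)) = E (g x) := by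
    intro E hE x hx
    have h := hE (g x) (hgΓ x hx)
    rw [hfg x] at h
    rw [← h]
    ext w
    simp only [Submodule.mem_map]
    constructor
    · rintro ⟨w', ⟨w'', hw'', rfl⟩, rfl⟩
      simpa using hw''
    · intro hw
      exact ⟨(A (g x)) w, ⟨w, hw, rfl⟩, by simp⟩
  refine ⟨fun x hx => (hdom.1 x hx).symm, ?_, hmap E2 hdom.2.2.2.1, hmap E1 hdom.2.2.1, ?_⟩
  · intro x hx
    have h := Submodule.finrank_add_eq_of_isCompl (hdom.1 x hx)
    rw [finrank_euclideanSpace_fin, hdom.2.1 x hx] at h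
    omega
  · intro x hx v hv w hw hnv hnw
    have hy : f^[m] (g^[m] x) = x :=
      (show Function.LeftInverse f g from hfg).iterate m x
    have hyΓ : g^[m] x ∈ Γ := iterate_mem g hgΓ m x hx
    rw [cocycle_inv f A g hfg m x]
    rw [ContinuousLinearEquiv.symm_symm]
    have hv' : v ∈ E1 (f^[m] (g^[m] x)) := by rw [hy]; exact hv
    have := hdom.2.2.2.2 (g^[m] x) hyΓ w hw v hv' hnw hnv
    linarith [this]

end DomSplitAux

theorem stmt9 {M : Type*} {d : ℕ} (f : M → M) (hf : Function.Bijective f)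
    (Γ : Set M) (hΓinv : f '' Γ = Γ)
    (A : M → (EuclideanSpace ℝ (Fin d) ≃L[ℝ] EuclideanSpace ℝ (Fin d)))
    (K : ℝ)
    (hK : ∀ x ∈ Γ, ‖(A x : EuclideanSpace ℝ (Fin d) →L[ℝ] EuclideanSpace ℝ (Fin d))‖ ≤ K ∧
      ‖((A x).symm : EuclideanSpace ℝ (Fin d) →L[ℝ] EuclideanSpace ℝ (Fin d))‖ ≤ K)
    (p : ℕ) (hp : 1 ≤ p) (hpd : p ≤ d - 1)
    (m m' : ℕ) (hm : 1 ≤ m) (hm' : 1 ≤ m')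
    (E1 E2 F1 F2 : M → Submodule ℝ (EuclideanSpace ℝ (Fin d)))
    (hdomE : IsDominatedSplitting f A Γ p m E1 E2)
    (hdomF : IsDominatedSplitting f A Γ p m' F1 F2) :
    ∀ x ∈ Γ, E1 x = F1 x ∧ E2 x = F2 x := by
  have hd2 : 2 ≤ d := by omega
  have hpd' : p ≤ d := by omega
  have hfΓ : ∀ x ∈ Γ, f x ∈ Γ := by
    intro x hx
    rw [← hΓinv]
    exact ⟨x, hx, rfl⟩
  set g : M → M := fun x => (Equiv.ofBijective f hf).symm x with hgdef
  have hfg : ∀ x, f (g x) = x := fun x => (Equiv.ofBijective f hf).apply_symm_apply x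
  have hgf : ∀ x, g (f x) = x := fun x => (Equiv.ofBijective f hf).symm_apply_apply x
  have hgΓ : ∀ x ∈ Γ, g x ∈ Γ := by
    intro x hx
    rw [← hΓinv] at hx
    obtain ⟨y, hy, rfl⟩ := hx
    rw [hgf y]
    exact hy
  have hsub1 := DomSplitAux.subset f A hfΓ hpd' hm hm' hdomE hdomF
  have hsub2 := DomSplitAux.subset f A hfΓ hpd' hm' hm hdomF hdomE
  have hdomE' := DomSplitAux.inv_dom f A g hfg hgΓ hdomE
  have hdomF' := DomSplitAux.inv_dom f A g hfg hgΓ hdomF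
  have hsub3 := DomSplitAux.subset g (fun y => (A (g y)).symm) hgΓ
    (by omega : d - p ≤ d) hm hm' hdomE' hdomF'
  have hsub4 := DomSplitAux.subset g (fun y => (A (g y)).symm) hgΓ
    (by omega : d - p ≤ d) hm' hm hdomF' hdomE'
  intro x hx
  exact ⟨le_antisymm (hsub4 x hx) (hsub3 x hx),
    le_antisymm (hsub2 x hx) (hsub1 x hx)⟩
end

section
/- Let M be a compact metric space, f : M → M a homeomorphism, and μ an f-invariant Borel probability measure on M. For a continuous map A : M → GL(d,ℝ) define LE₁(A) = inf_{n≥1} (1/n) ∫_M log ‖A^n(x)‖ dμ(x), which is a (finite) real number. Then A ↦ LE₁(A) is upper semicontinuous with respect to uniform convergence: for every continuous A₀ : M → GL(d,ℝ) and every ε > 0 there exists δ > 0 such that every continuous A : M → GL(d,ℝ) with sup_{x∈M} ‖A(x) − A₀(x)‖ < δ satisfies LE₁(A) < LE₁(A₀) + ε. -/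
open MeasureTheory

/-- The integrated top Lyapunov exponent
`LE₁(A) = inf_{n ≥ 1} (1/n) ∫ log ‖A^n(x)‖ dμ(x)`. -/
noncomputable def LE1 {M : Type*} [MeasurableSpace M] (μ : Measure M) (f : M → M) {d : ℕ}
    (A : M → (EuclideanSpace ℝ (Fin d) ≃L[ℝ] EuclideanSpace ℝ (Fin d))) : ℝ :=
  ⨅ n : {n : ℕ // 1 ≤ n}, (1 / (n : ℝ)) *
    ∫ x, Real.log
      ‖(cocycle f A (n : ℕ) x : EuclideanSpace ℝ (Fin d) →L[ℝ] EuclideanSpace ℝ (Fin d))‖ ∂μ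

section Aux

variable {M : Type*} {d : ℕ}

local notation "E" => EuclideanSpace ℝ (Fin d)

lemma cocycle_coe_succ (f : M → M) (A : M → (E ≃L[ℝ] E)) (n : ℕ) (x : M) :
    (cocycle f A (n + 1) x : E →L[ℝ] E)
      = (A (f^[n] x) : E →L[ℝ] E).comp (cocycle f A n x : E →L[ℝ] E) := rfl

lemma cocycle_symm_coe_succ (f : M → M) (A : M → (E ≃L[ℝ] E)) (n : ℕ) (x : M) :
    ((cocycle f A (n + 1) x).symm : E →L[ℝ] E)
      = ((cocycle f A n x).symm : E →L[ℝ] E).comp (((A (f^[n] x)).symm : E →L[ℝ] E)) := rfl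

lemma cocycle_cont [TopologicalSpace M] {f : M → M} (hf : Continuous f)
    {A : M → (E ≃L[ℝ] E)} (hA : Continuous fun x => (A x : E →L[ℝ] E)) (n : ℕ) :
    Continuous fun x => (cocycle f A n x : E →L[ℝ] E) := by
  induction n with
  | zero =>
    exact (continuous_const : Continuous fun _ : M =>
      ((ContinuousLinearEquiv.refl ℝ (EuclideanSpace ℝ (Fin d)) :
          EuclideanSpace ℝ (Fin d) ≃L[ℝ] EuclideanSpace ℝ (Fin d)) :
        EuclideanSpace ℝ (Fin d) →L[ℝ] EuclideanSpace ℝ (Fin d)))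
  | succ n ih =>
    have h : (fun x => (cocycle f A (n + 1) x : E →L[ℝ] E))
        = fun x => (A (f^[n] x) : E →L[ℝ] E).comp (cocycle f A n x : E →L[ℝ] E) := rfl
    rw [h]
    exact Continuous.clm_comp (hA.comp (hf.iterate n)) ih

lemma cocycle_norm_le_s11 {f : M → M} {A : M → (E ≃L[ℝ] E)} {C : ℝ}
    (hC : ∀ x, ‖(A x : E →L[ℝ] E)‖ ≤ C) (hC0 : 0 ≤ C) (n : ℕ) (x : M) :
    ‖(cocycle f A n x : E →L[ℝ] E)‖ ≤ C ^ n := by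
  induction n with
  | zero =>
    have h : (cocycle f A 0 x : E →L[ℝ] E) = ContinuousLinearMap.id ℝ _ := rfl
    rw [h, pow_zero]
    exact ContinuousLinearMap.norm_id_le
  | succ n ih =>
    rw [cocycle_coe_succ]
    calc ‖(A (f^[n] x) : E →L[ℝ] E).comp (cocycle f A n x : E →L[ℝ] E)‖
        ≤ ‖(A (f^[n] x) : E →L[ℝ] E)‖ * ‖(cocycle f A n x : E →L[ℝ] E)‖ :=
          ContinuousLinearMap.opNorm_comp_le _ _
      _ ≤ C * C ^ n := mul_le_mul (hC _) ih (norm_nonneg _) hC0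
      _ = C ^ (n + 1) := by ring

lemma cocycle_symm_norm_le_s11 {f : M → M} {A : M → (E ≃L[ℝ] E)} {C : ℝ}
    (hC : ∀ x, ‖((A x).symm : E →L[ℝ] E)‖ ≤ C) (hC0 : 0 ≤ C) (n : ℕ) (x : M) :
    ‖((cocycle f A n x).symm : E →L[ℝ] E)‖ ≤ C ^ n := by
  induction n with
  | zero =>
    have h : ((cocycle f A 0 x).symm : E →L[ℝ] E) = ContinuousLinearMap.id ℝ _ := rfl
    rw [h, pow_zero]
    exact ContinuousLinearMap.norm_id_le
  | succ n ih =>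
    rw [cocycle_symm_coe_succ]
    calc ‖((cocycle f A n x).symm : E →L[ℝ] E).comp ((A (f^[n] x)).symm : E →L[ℝ] E)‖
        ≤ ‖((cocycle f A n x).symm : E →L[ℝ] E)‖ * ‖((A (f^[n] x)).symm : E →L[ℝ] E)‖ :=
          ContinuousLinearMap.opNorm_comp_le _ _
      _ ≤ C ^ n * C := mul_le_mul ih (hC _) (norm_nonneg _) (pow_nonneg hC0 n)
      _ = C ^ (n + 1) := by ring

lemma cocycle_sub_norm_le {f : M → M} {A A₀ : M → (E ≃L[ℝ] E)} {C δ : ℝ} (hC1 : 1 ≤ C)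
    (hA : ∀ x, ‖(A x : E →L[ℝ] E)‖ ≤ C) (hA₀ : ∀ x, ‖(A₀ x : E →L[ℝ] E)‖ ≤ C)
    (hδ : 0 ≤ δ) (hdiff : ∀ x, ‖(A x : E →L[ℝ] E) - (A₀ x : E →L[ℝ] E)‖ ≤ δ)
    (n : ℕ) (x : M) :
    ‖(cocycle f A n x : E →L[ℝ] E) - (cocycle f A₀ n x : E →L[ℝ] E)‖
      ≤ (n : ℝ) * C ^ n * δ := by
  have hC0 : (0 : ℝ) ≤ C := le_trans zero_le_one hC1
  induction n with
  | zero =>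
    have h : (cocycle f A 0 x : E →L[ℝ] E) = (cocycle f A₀ 0 x : E →L[ℝ] E) := rfl
    rw [h, sub_self, norm_zero]
    norm_num
  | succ n ih =>
    have key : (cocycle f A (n + 1) x : E →L[ℝ] E) - (cocycle f A₀ (n + 1) x : E →L[ℝ] E)
        = (A (f^[n] x) : E →L[ℝ] E).comp
            ((cocycle f A n x : E →L[ℝ] E) - (cocycle f A₀ n x : E →L[ℝ] E))
          + ((A (f^[n] x) : E →L[ℝ] E) - (A₀ (f^[n] x) : E →L[ℝ] E)).comp
              (cocycle f A₀ n x : E →L[ℝ] E) := by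
      rw [cocycle_coe_succ, cocycle_coe_succ, ContinuousLinearMap.comp_sub,
        ContinuousLinearMap.sub_comp]
      abel
    have hpow : C ^ n ≤ C ^ (n + 1) := pow_le_pow_right₀ hC1 (Nat.le_succ n)
    calc ‖(cocycle f A (n + 1) x : E →L[ℝ] E) - (cocycle f A₀ (n + 1) x : E →L[ℝ] E)‖
        ≤ ‖(A (f^[n] x) : E →L[ℝ] E).comp
            ((cocycle f A n x : E →L[ℝ] E) - (cocycle f A₀ n x : E →L[ℝ] E))‖
          + ‖((A (f^[n] x) : E →L[ℝ] E) - (A₀ (f^[n] x) : E →L[ℝ] E)).comp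
              (cocycle f A₀ n x : E →L[ℝ] E)‖ := by rw [key]; exact norm_add_le _ _
      _ ≤ ‖(A (f^[n] x) : E →L[ℝ] E)‖
            * ‖(cocycle f A n x : E →L[ℝ] E) - (cocycle f A₀ n x : E →L[ℝ] E)‖
          + ‖(A (f^[n] x) : E →L[ℝ] E) - (A₀ (f^[n] x) : E →L[ℝ] E)‖
            * ‖(cocycle f A₀ n x : E →L[ℝ] E)‖ :=
        add_le_add (ContinuousLinearMap.opNorm_comp_le _ _)
          (ContinuousLinearMap.opNorm_comp_le _ _)
      _ ≤ C * ((n : ℝ) * C ^ n * δ) + δ * C ^ n := by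
        refine add_le_add ?_ ?_
        · exact mul_le_mul (hA _) ih (norm_nonneg _) hC0
        · exact mul_le_mul (hdiff _) (cocycle_norm_le_s11 hA₀ hC0 n x) (norm_nonneg _) hδ
      _ ≤ ((n : ℝ) + 1) * C ^ (n + 1) * δ := by
        have h2 : δ * C ^ n ≤ C ^ (n + 1) * δ := by
          rw [mul_comm]
          exact mul_le_mul_of_nonneg_right hpow hδ
        calc C * ((n : ℝ) * C ^ n * δ) + δ * C ^ n
            = (n : ℝ) * C ^ (n + 1) * δ + δ * C ^ n := by ring
          _ ≤ (n : ℝ) * C ^ (n + 1) * δ + C ^ (n + 1) * δ := add_le_add (le_refl _) h2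
          _ = ((n : ℝ) + 1) * C ^ (n + 1) * δ := by ring
      _ = ((n + 1 : ℕ) : ℝ) * C ^ (n + 1) * δ := by push_cast; ring

lemma one_le_norm_mul_norm_symm (hd : 0 < d) (e : E ≃L[ℝ] E) :
    1 ≤ ‖(e : E →L[ℝ] E)‖ * ‖(e.symm : E →L[ℝ] E)‖ := by
  haveI : Nonempty (Fin d) := ⟨⟨0, hd⟩⟩
  haveI : Nontrivial (EuclideanSpace ℝ (Fin d)) := inferInstance
  have hid : (ContinuousLinearMap.id ℝ (EuclideanSpace ℝ (Fin d)))
      = ((e.symm : E →L[ℝ] E).comp (e : E →L[ℝ] E)) := by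
    ext v
    simp
  calc (1 : ℝ) = ‖ContinuousLinearMap.id ℝ (EuclideanSpace ℝ (Fin d))‖ :=
        (ContinuousLinearMap.norm_id).symm
    _ = ‖(e.symm : E →L[ℝ] E).comp (e : E →L[ℝ] E)‖ := by rw [hid]
    _ ≤ ‖(e.symm : E →L[ℝ] E)‖ * ‖(e : E →L[ℝ] E)‖ := ContinuousLinearMap.opNorm_comp_le _ _
    _ = ‖(e : E →L[ℝ] E)‖ * ‖(e.symm : E →L[ℝ] E)‖ := mul_comm _ _

lemma norm_coe_pos (hd : 0 < d) (e : E ≃L[ℝ] E) : 0 < ‖(e : E →L[ℝ] E)‖ := by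
  have h := one_le_norm_mul_norm_symm hd e
  nlinarith [norm_nonneg (e : E →L[ℝ] E), norm_nonneg (e.symm : E →L[ℝ] E)]

lemma continuous_integrable [TopologicalSpace M] [CompactSpace M] [MeasurableSpace M]
    [OpensMeasurableSpace M] [T2Space M]
    (μ : Measure M) [IsFiniteMeasure μ] {g : M → ℝ} (hg : Continuous g) : Integrable g μ :=
  hg.integrable_of_hasCompactSupport (isClosed_tsupport g).isCompact

end Aux

set_option maxHeartbeats 1000000 in
theorem stmt11 {M : Type*} [MetricSpace M] [CompactSpace M]
    [MeasurableSpace M] [BorelSpace M]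
    (f : M ≃ₜ M) (μ : Measure M) [IsProbabilityMeasure μ]
    (hfμ : MeasurePreserving f μ μ)
    {d : ℕ} (A₀ : M → (EuclideanSpace ℝ (Fin d) ≃L[ℝ] EuclideanSpace ℝ (Fin d)))
    (hA₀ : Continuous fun x => (A₀ x : EuclideanSpace ℝ (Fin d) →L[ℝ] EuclideanSpace ℝ (Fin d)))
    (ε : ℝ) (hε : 0 < ε) :
    ∃ δ > 0, ∀ A : M → (EuclideanSpace ℝ (Fin d) ≃L[ℝ] EuclideanSpace ℝ (Fin d)),
      (Continuous fun x => (A x : EuclideanSpace ℝ (Fin d) →L[ℝ] EuclideanSpace ℝ (Fin d))) →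
      (∀ x, ‖(A x : EuclideanSpace ℝ (Fin d) →L[ℝ] EuclideanSpace ℝ (Fin d)) -
          (A₀ x : EuclideanSpace ℝ (Fin d) →L[ℝ] EuclideanSpace ℝ (Fin d))‖ < δ) →
      LE1 μ (⇑f) A < LE1 μ (⇑f) A₀ + ε := by
  classical
  set E := EuclideanSpace ℝ (Fin d) with hEdef
  haveI : Nonempty M := by
    by_contra h
    rw [not_nonempty_iff] at h
    have h1 : μ Set.univ = 1 := measure_univ
    rw [Set.univ_eq_empty_iff.mpr h] at h1
    simp at h1
  have hfc : Continuous (⇑f) := f.continuous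
  rcases Nat.eq_zero_or_pos d with hd | hd
  · -- degenerate case d = 0 : everything is zero
    subst hd
    refine ⟨1, one_pos, fun A hAc hAd => ?_⟩
    have hz : ∀ B : M → (E ≃L[ℝ] E), LE1 μ (⇑f) B = 0 := by
      intro B
      have hnorm : ∀ (n : ℕ) (x : M), ‖(cocycle (⇑f) B n x : E →L[ℝ] E)‖ = 0 := by
        intro n x
        have h0 : (cocycle (⇑f) B n x : E →L[ℝ] E) = 0 := Subsingleton.elim _ _
        rw [h0, norm_zero]
      simp only [LE1, hnorm, Real.log_zero, integral_zero, mul_zero]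
      exact ciInf_const
    rw [hz A, hz A₀]
    linarith
  · -- main case d ≥ 1
    haveI : Nonempty (Fin d) := ⟨⟨0, hd⟩⟩
    haveI : Nontrivial (EuclideanSpace ℝ (Fin d)) := inferInstance
    -- uniform bound for A₀
    obtain ⟨z, _, hz⟩ := isCompact_univ.exists_isMaxOn Set.univ_nonempty (hA₀.norm).continuousOn
    set C : ℝ := ‖(A₀ z : E →L[ℝ] E)‖ + 1 with hCdef
    have hC1 : (1 : ℝ) ≤ C := by
      have := norm_nonneg (A₀ z : E →L[ℝ] E); simp only [hCdef]; linarith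
    have hC0 : (0 : ℝ) ≤ C := le_trans zero_le_one hC1
    have hA₀C' : ∀ x, ‖(A₀ x : E →L[ℝ] E)‖ ≤ C - 1 := by
      intro x
      have := hz (Set.mem_univ x)
      simpa [hCdef] using this
    have hA₀C : ∀ x, ‖(A₀ x : E →L[ℝ] E)‖ ≤ C := fun x => by linarith [hA₀C' x]
    -- integrability of all relevant functions
    have hint : ∀ (B : M → (E ≃L[ℝ] E)),
        (Continuous fun x => (B x : E →L[ℝ] E)) → ∀ k : ℕ,
        Integrable (fun x => Real.log ‖(cocycle (⇑f) B k x : E →L[ℝ] E)‖) μ := by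
      intro B hBc k
      refine continuous_integrable μ ?_
      exact ((cocycle_cont hfc hBc k).norm).log fun x => ne_of_gt (norm_coe_pos hd _)
    -- choose n with the n-th term close to the infimum
    have hlt : LE1 μ (⇑f) A₀ < LE1 μ (⇑f) A₀ + ε / 2 := by linarith
    obtain ⟨n, hn⟩ := exists_lt_of_ciInf_lt
      (show (⨅ k : {n : ℕ // 1 ≤ n}, (1 / (k : ℝ)) *
        ∫ x, Real.log ‖(cocycle (⇑f) A₀ (k : ℕ) x : E →L[ℝ] E)‖ ∂μ) <
        LE1 μ (⇑f) A₀ + ε / 2 from hlt)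
    -- minimum of the norm of the n-th cocycle of A₀
    have hcontA₀n : Continuous fun x => (cocycle (⇑f) A₀ (n : ℕ) x : E →L[ℝ] E) :=
      cocycle_cont hfc hA₀ _
    obtain ⟨w, _, hw⟩ := isCompact_univ.exists_isMinOn Set.univ_nonempty
      (hcontA₀n.norm).continuousOn
    set m : ℝ := ‖(cocycle (⇑f) A₀ (n : ℕ) w : E →L[ℝ] E)‖ with hmdef
    have hm0 : 0 < m := norm_coe_pos hd _
    have hmle : ∀ x, m ≤ ‖(cocycle (⇑f) A₀ (n : ℕ) x : E →L[ℝ] E)‖ := fun x =>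
      hw (Set.mem_univ x)
    have hCn0 : (0 : ℝ) < C ^ (n : ℕ) := pow_pos (lt_of_lt_of_le one_pos hC1) _
    -- the choice of δ
    refine ⟨min 1 (ε * m / (2 * C ^ (n : ℕ))), lt_min one_pos (by positivity), ?_⟩
    intro A hAc hAd
    set δ : ℝ := min 1 (ε * m / (2 * C ^ (n : ℕ))) with hδdef
    have hδ0 : 0 < δ := lt_min one_pos (by positivity)
    have hδ1 : δ ≤ 1 := min_le_left _ _
    have hδ2 : δ ≤ ε * m / (2 * C ^ (n : ℕ)) := min_le_right _ _
    have hdiff : ∀ x, ‖(A x : E →L[ℝ] E) - (A₀ x : E →L[ℝ] E)‖ ≤ δ := fun x =>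
      le_of_lt (hAd x)
    have hAC : ∀ x, ‖(A x : E →L[ℝ] E)‖ ≤ C := by
      intro x
      calc ‖(A x : E →L[ℝ] E)‖
          ≤ ‖(A₀ x : E →L[ℝ] E)‖ + ‖(A x : E →L[ℝ] E) - (A₀ x : E →L[ℝ] E)‖ := by
            have h := norm_add_le ((A₀ x : E →L[ℝ] E))
              ((A x : E →L[ℝ] E) - (A₀ x : E →L[ℝ] E))
            simpa using h
        _ ≤ (C - 1) + 1 := add_le_add (hA₀C' x) (le_trans (hdiff x) hδ1)
        _ = C := by ring
    -- continuity and bound for the inverses of A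
    have hAinv_eq : ∀ x : M, ((A x).symm : E →L[ℝ] E)
        = Ring.inverse ((A x : E →L[ℝ] E)) := fun x =>
      (Ring.inverse_unit (A x).toUnit).symm
    have hAinvc : Continuous fun x => ((A x).symm : E →L[ℝ] E) := by
      simp only [hAinv_eq]
      rw [continuous_iff_continuousAt]
      intro x
      have h1 : ContinuousAt (Ring.inverse : (E →L[ℝ] E) → (E →L[ℝ] E))
          ((A x : E →L[ℝ] E)) := NormedRing.inverse_continuousAt (A x).toUnit
      have h2 : ContinuousAt ((Ring.inverse : (E →L[ℝ] E) → (E →L[ℝ] E))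
          ∘ fun y : M => ((A y : E →L[ℝ] E))) x :=
        ContinuousAt.comp (f := fun y : M => ((A y : E →L[ℝ] E))) h1 hAc.continuousAt
      exact h2
    obtain ⟨v, _, hv⟩ := isCompact_univ.exists_isMaxOn Set.univ_nonempty
      (hAinvc.norm).continuousOn
    set Ci : ℝ := max 1 ‖((A v).symm : E →L[ℝ] E)‖ with hCidef
    have hCi1 : (1 : ℝ) ≤ Ci := le_max_left _ _
    have hCi0 : (0 : ℝ) ≤ Ci := le_trans zero_le_one hCi1
    have hCile : ∀ x, ‖((A x).symm : E →L[ℝ] E)‖ ≤ Ci := fun x =>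
      le_trans (hv (Set.mem_univ x)) (le_max_right _ _)
    -- the family of quantities defining LE1(A) is bounded below
    have hbdd : BddBelow (Set.range fun k : {n : ℕ // 1 ≤ n} => (1 / (k : ℝ)) *
        ∫ x, Real.log ‖(cocycle (⇑f) A (k : ℕ) x : E →L[ℝ] E)‖ ∂μ) := by
      refine ⟨-Real.log Ci, ?_⟩
      rintro r ⟨k, rfl⟩
      have hk1 : 1 ≤ (k : ℕ) := k.2
      have hkpos : (0 : ℝ) < ((k : ℕ) : ℝ) := by exact_mod_cast hk1
      have hCik : (0 : ℝ) < Ci ^ (k : ℕ) := pow_pos (lt_of_lt_of_le one_pos hCi1) _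
      have hptw : ∀ x : M, -(((k : ℕ) : ℝ) * Real.log Ci)
          ≤ Real.log ‖(cocycle (⇑f) A (k : ℕ) x : E →L[ℝ] E)‖ := by
        intro x
        have h1 : 1 ≤ ‖(cocycle (⇑f) A (k : ℕ) x : E →L[ℝ] E)‖
            * ‖((cocycle (⇑f) A (k : ℕ) x).symm : E →L[ℝ] E)‖ :=
          one_le_norm_mul_norm_symm hd _
        have h2 : ‖((cocycle (⇑f) A (k : ℕ) x).symm : E →L[ℝ] E)‖ ≤ Ci ^ (k : ℕ) :=
          cocycle_symm_norm_le_s11 hCile hCi0 _ x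
        have h3 : (Ci ^ (k : ℕ))⁻¹ ≤ ‖(cocycle (⇑f) A (k : ℕ) x : E →L[ℝ] E)‖ := by
          rw [← one_div, div_le_iff₀ hCik]
          calc (1 : ℝ) ≤ ‖(cocycle (⇑f) A (k : ℕ) x : E →L[ℝ] E)‖
              * ‖((cocycle (⇑f) A (k : ℕ) x).symm : E →L[ℝ] E)‖ := h1
            _ ≤ ‖(cocycle (⇑f) A (k : ℕ) x : E →L[ℝ] E)‖ * Ci ^ (k : ℕ) :=
              mul_le_mul_of_nonneg_left h2 (norm_nonneg _)
        calc -(((k : ℕ) : ℝ) * Real.log Ci) = Real.log ((Ci ^ (k : ℕ))⁻¹) := by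
              rw [Real.log_inv, Real.log_pow]
          _ ≤ Real.log ‖(cocycle (⇑f) A (k : ℕ) x : E →L[ℝ] E)‖ :=
            Real.log_le_log (inv_pos.mpr hCik) h3
      have hI : -(((k : ℕ) : ℝ) * Real.log Ci)
          ≤ ∫ x, Real.log ‖(cocycle (⇑f) A (k : ℕ) x : E →L[ℝ] E)‖ ∂μ := by
        have h := integral_mono (integrable_const (-(((k : ℕ) : ℝ) * Real.log Ci)))
          (hint A hAc (k : ℕ)) (fun x => hptw x)
        simpa using h
      have hk' : (1 / ((k : ℕ) : ℝ)) * (-(((k : ℕ) : ℝ) * Real.log Ci)) = -Real.log Ci := by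
        field_simp
      calc -Real.log Ci
          = (1 / ((k : ℕ) : ℝ)) * (-(((k : ℕ) : ℝ) * Real.log Ci)) := hk'.symm
        _ ≤ (1 / ((k : ℕ) : ℝ)) *
            ∫ x, Real.log ‖(cocycle (⇑f) A (k : ℕ) x : E →L[ℝ] E)‖ ∂μ :=
          mul_le_mul_of_nonneg_left hI (by positivity)
    have hLE1A : LE1 μ (⇑f) A ≤ (1 / ((n : ℕ) : ℝ)) *
        ∫ x, Real.log ‖(cocycle (⇑f) A (n : ℕ) x : E →L[ℝ] E)‖ ∂μ := ciInf_le hbdd n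
    -- pointwise comparison of the two n-th terms
    set K : ℝ := ((n : ℕ) : ℝ) * C ^ (n : ℕ) * δ with hKdef
    have hK0 : 0 ≤ K := by positivity
    have hKδ : ∀ x, ‖(cocycle (⇑f) A (n : ℕ) x : E →L[ℝ] E)
        - (cocycle (⇑f) A₀ (n : ℕ) x : E →L[ℝ] E)‖ ≤ K :=
      cocycle_sub_norm_le hC1 hAC hA₀C (le_of_lt hδ0) hdiff _
    have hptw2 : ∀ x, Real.log ‖(cocycle (⇑f) A (n : ℕ) x : E →L[ℝ] E)‖
        ≤ Real.log ‖(cocycle (⇑f) A₀ (n : ℕ) x : E →L[ℝ] E)‖ + K / m := by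
      intro x
      set a : ℝ := ‖(cocycle (⇑f) A₀ (n : ℕ) x : E →L[ℝ] E)‖ with hadef
      have ha : 0 < a := lt_of_lt_of_le hm0 (hmle x)
      have hle : ‖(cocycle (⇑f) A (n : ℕ) x : E →L[ℝ] E)‖ ≤ a + K := by
        calc ‖(cocycle (⇑f) A (n : ℕ) x : E →L[ℝ] E)‖
            ≤ a + ‖(cocycle (⇑f) A (n : ℕ) x : E →L[ℝ] E)
                - (cocycle (⇑f) A₀ (n : ℕ) x : E →L[ℝ] E)‖ := by
              have h := norm_add_le ((cocycle (⇑f) A₀ (n : ℕ) x : E →L[ℝ] E))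
                ((cocycle (⇑f) A (n : ℕ) x : E →L[ℝ] E)
                  - (cocycle (⇑f) A₀ (n : ℕ) x : E →L[ℝ] E))
              simpa [hadef] using h
          _ ≤ a + K := add_le_add (le_refl a) (hKδ x)
      have hposA : 0 < ‖(cocycle (⇑f) A (n : ℕ) x : E →L[ℝ] E)‖ := norm_coe_pos hd _
      have h1 : Real.log ‖(cocycle (⇑f) A (n : ℕ) x : E →L[ℝ] E)‖ ≤ Real.log (a + K) :=
        Real.log_le_log hposA hle
      have haK : (0 : ℝ) < a + K := by linarith
      have hz2 : Real.log (a + K) - Real.log a = Real.log ((a + K) / a) := by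
        rw [Real.log_div (ne_of_gt haK) (ne_of_gt ha)]
      have h3 : Real.log ((a + K) / a) ≤ (a + K) / a - 1 :=
        Real.log_le_sub_one_of_pos (div_pos haK ha)
      have h4 : (a + K) / a - 1 = K / a := by
        rw [add_div, div_self (ne_of_gt ha)]
        ring
      have h5 : K / a ≤ K / m := div_le_div_of_nonneg_left hK0 hm0 (hmle x)
      linarith
    -- integrate the pointwise comparison
    have hI2 : ∫ x, Real.log ‖(cocycle (⇑f) A (n : ℕ) x : E →L[ℝ] E)‖ ∂μ
        ≤ (∫ x, Real.log ‖(cocycle (⇑f) A₀ (n : ℕ) x : E →L[ℝ] E)‖ ∂μ) + K / m := by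
      calc ∫ x, Real.log ‖(cocycle (⇑f) A (n : ℕ) x : E →L[ℝ] E)‖ ∂μ
          ≤ ∫ x, (Real.log ‖(cocycle (⇑f) A₀ (n : ℕ) x : E →L[ℝ] E)‖ + K / m) ∂μ :=
            integral_mono (hint A hAc (n : ℕ))
              ((hint A₀ hA₀ (n : ℕ)).add (integrable_const _)) hptw2
        _ = (∫ x, Real.log ‖(cocycle (⇑f) A₀ (n : ℕ) x : E →L[ℝ] E)‖ ∂μ) + K / m := by
            rw [integral_add (hint A₀ hA₀ (n : ℕ)) (integrable_const _), integral_const]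
            simp
    have hn1 : 1 ≤ (n : ℕ) := n.2
    have hnpos : (0 : ℝ) < ((n : ℕ) : ℝ) := by exact_mod_cast hn1
    have hstep : (1 / ((n : ℕ) : ℝ)) * (K / m) ≤ ε / 2 := by
      have heq : (1 / ((n : ℕ) : ℝ)) * (K / m) = C ^ (n : ℕ) * δ / m := by
        rw [hKdef]; field_simp
      rw [heq, div_le_iff₀ hm0]
      calc C ^ (n : ℕ) * δ ≤ C ^ (n : ℕ) * (ε * m / (2 * C ^ (n : ℕ))) :=
            mul_le_mul_of_nonneg_left hδ2 (le_of_lt hCn0)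
        _ = ε / 2 * m := by field_simp
    calc LE1 μ (⇑f) A
        ≤ (1 / ((n : ℕ) : ℝ)) *
          ∫ x, Real.log ‖(cocycle (⇑f) A (n : ℕ) x : E →L[ℝ] E)‖ ∂μ := hLE1A
      _ ≤ (1 / ((n : ℕ) : ℝ)) *
          ((∫ x, Real.log ‖(cocycle (⇑f) A₀ (n : ℕ) x : E →L[ℝ] E)‖ ∂μ) + K / m) :=
        mul_le_mul_of_nonneg_left hI2 (by positivity)
      _ = (1 / ((n : ℕ) : ℝ)) *
          (∫ x, Real.log ‖(cocycle (⇑f) A₀ (n : ℕ) x : E →L[ℝ] E)‖ ∂μ)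
          + (1 / ((n : ℕ) : ℝ)) * (K / m) := by ring
      _ < (LE1 μ (⇑f) A₀ + ε / 2) + ε / 2 := by
        have hn' : (1 / ((n : ℕ) : ℝ)) *
            (∫ x, Real.log ‖(cocycle (⇑f) A₀ (n : ℕ) x : E →L[ℝ] E)‖ ∂μ)
            < LE1 μ (⇑f) A₀ + ε / 2 := hn
        linarith
      _ = LE1 μ (⇑f) A₀ + ε := by ring
end
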